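/- Let (A, ≻_λ, ≺_λ, ⋎_λ) be a conformal NS-algebra. Then (A, ∘_λ, ∨_λ) is an NS-Lie conformal algebra, where x∘_λ y = x≻_λ y - y≺_{-λ-∂}x and x∨_λ y = x⋎_λ y - y⋎_{-λ-∂}x. -/

import Mathlib

/- ------------------------------------------------------------------
Common definitions: λ-polynomials with coefficients in a ℂ[∂]-module,
Lie conformal algebras, modules, cochain complexes, the
Nijenhuis–Richardson bracket, bidegrees, lifts and twistings.
------------------------------------------------------------------- -/

open scoped Classical

noncomputable section

namespace LCAF

/-- `MP k M` : `M`-valued polynomials in the `k` variables `λ₀, …, λ_{k-1}`,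
encoded as finitely supported functions on multi-indices. -/
abbrev MP (k : ℕ) (M : Type*) [AddCommGroup M] : Type _ :=
  (Fin k →₀ ℕ) →₀ M

variable {A B M N A₁ A₂ : Type*}

section PolyOps

variable [AddCommGroup M] [Module ℂ M] [AddCommGroup N] [Module ℂ N]

/-- Apply a linear map to all coefficients of a polynomial. -/
def mapCoeff {k : ℕ} (g : M →ₗ[ℂ] N) (p : MP k M) : MP k N :=
  p.mapRange g (map_zero g)

/-- Multiplication by the monomial `λ^α`. -/
def monMul {k : ℕ} (α : Fin k →₀ ℕ) (p : MP k M) : MP k M :=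
  Finsupp.mapDomain (fun β => α + β) p

/-- The variable `λᵢ` as a scalar polynomial. -/
def Xv {k : ℕ} (i : Fin k) : MP k ℂ :=
  Finsupp.single (Finsupp.single i 1) (1 : ℂ)

/-- Multiplication of an `M`-valued polynomial by a scalar polynomial. -/
def scaleP {k : ℕ} (q : MP k ℂ) (p : MP k M) : MP k M :=
  q.sum fun α r => r • monMul α p

/-- The operator `q + c∂` acting on `M`-valued polynomials. -/
def opnd {k : ℕ} (D : M →ₗ[ℂ] M) (q : MP k ℂ) (c : ℂ) : MP k M → MP k M :=
  fun p => scaleP q p + c • mapCoeff D p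

/-- Substitution: in an `M`-valued polynomial in `k` variables, substitute the
`i`-th variable by the affine expression `q i + (c i)·∂` (with `∂ = D` acting on
coefficients), landing in polynomials in `k'` new variables. -/
def substFun {k k' : ℕ} (D : M →ₗ[ℂ] M) (q : Fin k → MP k' ℂ) (c : Fin k → ℂ)
    (p : MP k M) : MP k' M :=
  p.sum fun α m =>
    ((List.ofFn fun i : Fin k => (opnd D (q i) (c i))^[α i]).foldr (· ∘ ·) id)
      (Finsupp.single 0 m)

/-- Renaming of variables. -/
def renameV {k k' : ℕ} (h : Fin k → Fin k') (p : MP k M) : MP k' M :=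
  Finsupp.mapDomain (fun α => Finsupp.mapDomain h α) p

/-- The substitution `λ ↦ -λ-∂` in one variable. -/
def sub1 (D : M →ₗ[ℂ] M) (p : MP 1 M) : MP 1 M :=
  substFun D (fun _ => -(Xv 0)) (fun _ => -1) p

/-- The multi-index of the single variable `λ` in one variable. -/
def lam1 : Fin 1 →₀ ℕ := Finsupp.single 0 1

end PolyOps

section Binary

variable [AddCommGroup M] [Module ℂ M]

/-- `F` with its variable substituted by the expression `q + c ∂`, in two
variables `λ = λ₀`, `μ = λ₁`. -/
def opE (D : M →ₗ[ℂ] M) (F : A → B → MP 1 M) (q : MP 2 ℂ) (c : ℂ) (a : A) (b : B) :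
    MP 2 M :=
  substFun D (fun _ => q) (fun _ => c) (F a b)

/-- `F` applied with polynomial second argument (extended coefficientwise). -/
def opR [AddCommGroup B] [Module ℂ B] (D : M →ₗ[ℂ] M) (F : A → B → MP 1 M)
    (q : MP 2 ℂ) (c : ℂ) (a : A) (p : MP 2 B) : MP 2 M :=
  p.sum fun β x => monMul β (opE D F q c a x)

/-- `F` applied with polynomial first argument (extended coefficientwise). -/
def opL [AddCommGroup A] [Module ℂ A] (D : M →ₗ[ℂ] M) (F : A → B → MP 1 M)
    (q : MP 2 ℂ) (c : ℂ) (p : MP 2 A) (b : B) : MP 2 M :=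
  p.sum fun β x => monMul β (opE D F q c x b)

end Binary

section LCA

variable [AddCommGroup A] [Module ℂ A] [AddCommGroup M] [Module ℂ M]

/-- `(A, D, br)` is a Lie conformal algebra: `br a b` is `[a_λ b]`, an `A`-valued
polynomial in one variable `λ`. -/
structure IsLCA (D : A →ₗ[ℂ] A) (br : A → A → MP 1 A) : Prop where
  add_left : ∀ a b c : A, br (a + b) c = br a c + br b c
  smul_left : ∀ (r : ℂ) (a b : A), br (r • a) b = r • br a b
  add_right : ∀ a b c : A, br a (b + c) = br a b + br a c
  smul_right : ∀ (r : ℂ) (a b : A), br a (r • b) = r • br a b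
  sesq_left : ∀ a b : A, br (D a) b = -(monMul lam1 (br a b))
  sesq_right : ∀ a b : A, br a (D b) = monMul lam1 (br a b) + mapCoeff D (br a b)
  skew : ∀ a b : A, br a b = -(sub1 D (br b a))
  jacobi : ∀ a b c : A,
    opR D br (Xv 0) 0 a (renameV (fun _ => (1 : Fin 2)) (br b c)) =
      opL D br (Xv 0 + Xv 1) 0 (renameV (fun _ => (0 : Fin 2)) (br a b)) c +
        opR D br (Xv 1) 0 b (renameV (fun _ => (0 : Fin 2)) (br a c))

/-- `(M, DM, rho)` is a module over the Lie conformal algebra `(A, D, br)`. -/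
structure IsLCAMod (D : A →ₗ[ℂ] A) (br : A → A → MP 1 A)
    (DM : M →ₗ[ℂ] M) (rho : A → M → MP 1 M) : Prop where
  add_left : ∀ (a b : A) (m : M), rho (a + b) m = rho a m + rho b m
  smul_left : ∀ (r : ℂ) (a : A) (m : M), rho (r • a) m = r • rho a m
  add_right : ∀ (a : A) (m n : M), rho a (m + n) = rho a m + rho a n
  smul_right : ∀ (r : ℂ) (a : A) (m : M), rho a (r • m) = r • rho a m
  d_left : ∀ (a : A) (m : M), rho (D a) m = -(monMul lam1 (rho a m))
  d_right : ∀ (a : A) (m : M),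
    rho a (DM m) = monMul lam1 (rho a m) + mapCoeff DM (rho a m)
  comm : ∀ (a b : A) (m : M),
    opR DM rho (Xv 0) 0 a (renameV (fun _ => (1 : Fin 2)) (rho b m)) -
      opR DM rho (Xv 1) 0 b (renameV (fun _ => (0 : Fin 2)) (rho a m)) =
    opL DM rho (Xv 0 + Xv 1) 0 (renameV (fun _ => (0 : Fin 2)) (br a b)) m

/-- `phi` is a 2-cocycle of `(A, D, br)` with coefficients in the module
`(M, DM, rho)`. -/
structure IsTwoCocycle (D : A →ₗ[ℂ] A) (br : A → A → MP 1 A)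
    (DM : M →ₗ[ℂ] M) (rho : A → M → MP 1 M) (phi : A → A → MP 1 M) : Prop where
  add_left : ∀ (a b c : A), phi (a + b) c = phi a c + phi b c
  smul_left : ∀ (r : ℂ) (a b : A), phi (r • a) b = r • phi a b
  add_right : ∀ (a b c : A), phi a (b + c) = phi a b + phi a c
  smul_right : ∀ (r : ℂ) (a b : A), phi a (r • b) = r • phi a b
  sesq_left : ∀ a b : A, phi (D a) b = -(monMul lam1 (phi a b))
  sesq_right : ∀ a b : A, phi a (D b) = monMul lam1 (phi a b) + mapCoeff DM (phi a b)
  skew : ∀ a b : A, phi a b = -(sub1 DM (phi b a))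
  cocycle : ∀ a b c : A,
    opR DM rho (Xv 0) 0 a (renameV (fun _ => (1 : Fin 2)) (phi b c))
      - opR DM rho (Xv 1) 0 b (renameV (fun _ => (0 : Fin 2)) (phi a c))
      + opR DM rho (-(Xv 0) - Xv 1) (-1) c (renameV (fun _ => (0 : Fin 2)) (phi a b))
      + opR DM phi (Xv 0) 0 a (renameV (fun _ => (1 : Fin 2)) (br b c))
      - opR DM phi (Xv 1) 0 b (renameV (fun _ => (0 : Fin 2)) (br a c))
      - opL DM phi (Xv 0 + Xv 1) 0 (renameV (fun _ => (0 : Fin 2)) (br a b)) c = 0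

/-- `T : M → A` is a relative Rota–Baxter operator. -/
def IsRB (br : A → A → MP 1 A) (DM : M →ₗ[ℂ] M) (rho : A → M → MP 1 M)
    (T : M →ₗ[ℂ] A) : Prop :=
  ∀ m n : M, br (T m) (T n) = mapCoeff T (rho (T m) n - sub1 DM (rho (T n) m))

/-- `T : M → A` is a `φ`-twisted relative Rota–Baxter operator. -/
def IsTwistedRB (br : A → A → MP 1 A) (DM : M →ₗ[ℂ] M) (rho : A → M → MP 1 M)
    (phi : A → A → MP 1 M) (T : M →ₗ[ℂ] A) : Prop :=
  ∀ m n : M, br (T m) (T n) =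
    mapCoeff T (rho (T m) n - sub1 DM (rho (T n) m) + phi (T m) (T n))

/-- Combine an `A`-valued and an `M`-valued polynomial into an `A × M`-valued one. -/
def pairP {k : ℕ} (p : MP k A) (q : MP k M) : MP k (A × M) :=
  Finsupp.mapRange (fun a => (a, (0 : M))) rfl p +
    Finsupp.mapRange (fun m => ((0 : A), m)) rfl q

/-- The (φ-twisted) semidirect product λ-bracket on `A × M`. -/
def sdBr (br : A → A → MP 1 A) (DM : M →ₗ[ℂ] M) (rho : A → M → MP 1 M)
    (phi : A → A → MP 1 M) : A × M → A × M → MP 1 (A × M) :=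
  fun x y => pairP (br x.1 y.1) (rho x.1 y.2 - sub1 DM (rho y.1 x.2) + phi x.1 y.1)

end LCA

section NS

variable [AddCommGroup A] [Module ℂ A]

/-- The λ-bracket `[a_λ b] = a∘_λ b - b∘_{-λ-∂} a + a∨_λ b` attached to a pair of
λ-multiplications. -/
def lieNS (D : A →ₗ[ℂ] A) (o v : A → A → MP 1 A) : A → A → MP 1 A :=
  fun a b => o a b - sub1 D (o b a) + v a b

/-- `(A, ∘_λ, ∨_λ)` is an NS-Lie conformal algebra. -/
structure IsNSLie (D : A →ₗ[ℂ] A) (o v : A → A → MP 1 A) : Prop where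
  o_add_left : ∀ a b c : A, o (a + b) c = o a c + o b c
  o_smul_left : ∀ (r : ℂ) (a b : A), o (r • a) b = r • o a b
  o_add_right : ∀ a b c : A, o a (b + c) = o a b + o a c
  o_smul_right : ∀ (r : ℂ) (a b : A), o a (r • b) = r • o a b
  o_sesq_left : ∀ a b : A, o (D a) b = -(monMul lam1 (o a b))
  o_sesq_right : ∀ a b : A, o a (D b) = monMul lam1 (o a b) + mapCoeff D (o a b)
  v_add_left : ∀ a b c : A, v (a + b) c = v a c + v b c
  v_smul_left : ∀ (r : ℂ) (a b : A), v (r • a) b = r • v a b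
  v_add_right : ∀ a b c : A, v a (b + c) = v a b + v a c
  v_smul_right : ∀ (r : ℂ) (a b : A), v a (r • b) = r • v a b
  v_sesq_left : ∀ a b : A, v (D a) b = -(monMul lam1 (v a b))
  v_sesq_right : ∀ a b : A, v a (D b) = monMul lam1 (v a b) + mapCoeff D (v a b)
  v_skew : ∀ a b : A, v a b = -(sub1 D (v b a))
  ns1 : ∀ a b c : A,
    opL D o (Xv 0 + Xv 1) 0 (renameV (fun _ => (0 : Fin 2)) (o a b)) c
      - opR D o (Xv 0) 0 a (renameV (fun _ => (1 : Fin 2)) (o b c))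
      - opL D o (Xv 0 + Xv 1) 0 (renameV (fun _ => (1 : Fin 2)) (o b a)) c
      + opR D o (Xv 1) 0 b (renameV (fun _ => (0 : Fin 2)) (o a c))
      + opL D o (Xv 0 + Xv 1) 0 (renameV (fun _ => (0 : Fin 2)) (v a b)) c = 0
  ns2 : ∀ a b c : A,
    opR D v (Xv 0) 0 a (renameV (fun _ => (1 : Fin 2)) (lieNS D o v b c))
      - opL D v (Xv 0 + Xv 1) 0 (renameV (fun _ => (0 : Fin 2)) (lieNS D o v a b)) c
      - opR D v (Xv 1) 0 b (renameV (fun _ => (0 : Fin 2)) (lieNS D o v a c))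
      + opR D o (Xv 0) 0 a (renameV (fun _ => (1 : Fin 2)) (v b c))
      - opR D o (Xv 1) 0 b (renameV (fun _ => (0 : Fin 2)) (v a c))
      + opR D o (-(Xv 0) - Xv 1) (-1) c (renameV (fun _ => (0 : Fin 2)) (v a b)) = 0

/-- `(A, ≻_λ, ≺_λ, ⋎_λ)` is a conformal NS-algebra. -/
structure IsConfNS (D : A →ₗ[ℂ] A) (su pr cu : A → A → MP 1 A) : Prop where
  su_add_left : ∀ a b c : A, su (a + b) c = su a c + su b c
  su_smul_left : ∀ (r : ℂ) (a b : A), su (r • a) b = r • su a b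
  su_add_right : ∀ a b c : A, su a (b + c) = su a b + su a c
  su_smul_right : ∀ (r : ℂ) (a b : A), su a (r • b) = r • su a b
  su_sesq_left : ∀ a b : A, su (D a) b = -(monMul lam1 (su a b))
  su_sesq_right : ∀ a b : A, su a (D b) = monMul lam1 (su a b) + mapCoeff D (su a b)
  pr_add_left : ∀ a b c : A, pr (a + b) c = pr a c + pr b c
  pr_smul_left : ∀ (r : ℂ) (a b : A), pr (r • a) b = r • pr a b
  pr_add_right : ∀ a b c : A, pr a (b + c) = pr a b + pr a c
  pr_smul_right : ∀ (r : ℂ) (a b : A), pr a (r • b) = r • pr a b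
  pr_sesq_left : ∀ a b : A, pr (D a) b = -(monMul lam1 (pr a b))
  pr_sesq_right : ∀ a b : A, pr a (D b) = monMul lam1 (pr a b) + mapCoeff D (pr a b)
  cu_add_left : ∀ a b c : A, cu (a + b) c = cu a c + cu b c
  cu_smul_left : ∀ (r : ℂ) (a b : A), cu (r • a) b = r • cu a b
  cu_add_right : ∀ a b c : A, cu a (b + c) = cu a b + cu a c
  cu_smul_right : ∀ (r : ℂ) (a b : A), cu a (r • b) = r • cu a b
  cu_sesq_left : ∀ a b : A, cu (D a) b = -(monMul lam1 (cu a b))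
  cu_sesq_right : ∀ a b : A, cu a (D b) = monMul lam1 (cu a b) + mapCoeff D (cu a b)
  ax1 : ∀ x y z : A,
    opR D su (Xv 0) 0 x (renameV (fun _ => (1 : Fin 2)) (su y z)) =
      opL D su (Xv 0 + Xv 1) 0
        (renameV (fun _ => (0 : Fin 2)) (su x y + pr x y + cu x y)) z
  ax2 : ∀ x y z : A,
    opR D pr (Xv 0) 0 x (renameV (fun _ => (1 : Fin 2)) (su y z + pr y z + cu y z)) =
      opL D pr (Xv 0 + Xv 1) 0 (renameV (fun _ => (0 : Fin 2)) (pr x y)) z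
  ax3 : ∀ x y z : A,
    opR D su (Xv 0) 0 x (renameV (fun _ => (1 : Fin 2)) (pr y z)) =
      opL D pr (Xv 0 + Xv 1) 0 (renameV (fun _ => (0 : Fin 2)) (su x y)) z
  ax4 : ∀ x y z : A,
    opR D su (Xv 0) 0 x (renameV (fun _ => (1 : Fin 2)) (cu y z)) -
        opL D cu (Xv 0 + Xv 1) 0
          (renameV (fun _ => (0 : Fin 2)) (su x y + pr x y + cu x y)) z =
      opL D pr (Xv 0 + Xv 1) 0 (renameV (fun _ => (0 : Fin 2)) (cu x y)) z -
        opR D cu (Xv 0) 0 x (renameV (fun _ => (1 : Fin 2)) (su y z + pr y z + cu y z))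

/-- `N` is a Nijenhuis operator on the Lie conformal algebra `(A, D, br)`. -/
def IsNijenhuis (D : A →ₗ[ℂ] A) (br : A → A → MP 1 A) (N : A →ₗ[ℂ] A) : Prop :=
  (∀ a : A, N (D a) = D (N a)) ∧
  ∀ a b : A, br (N a) (N b) =
    mapCoeff N (br (N a) b + br a (N b) - mapCoeff N (br a b))

/-- The deformed bracket `[a_λ b]_N`. -/
def deformBr (br : A → A → MP 1 A) (N : A →ₗ[ℂ] A) : A → A → MP 1 A :=
  fun a b => br (N a) b + br a (N b) - mapCoeff N (br a b)

end NS

/- ------------------------  cochains  ------------------------ -/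

/-- `RawC n A M` : the underlying maps of cochains in `C^{n+1}(A, M)`:
`n+1` arguments from `A`, values in `M`-valued polynomials in `n` variables. -/
abbrev RawC (n : ℕ) (A : Type*) (M : Type*) [AddCommGroup M] : Type _ :=
  (Fin (n + 1) → A) → MP n M

section CochainDefs

variable [AddCommGroup A] [Module ℂ A] [AddCommGroup M] [Module ℂ M]

/-- The scalar-polynomial part of the expression for `λ_t`, where the last
variable is replaced by `λ† = -λ₀ - ⋯ - λ_{N-1} - ∂`. -/
def exprQ {N : ℕ} (t : Fin (N + 1)) : MP N ℂ :=
  if h : t = Fin.last N then -(∑ i : Fin N, Xv i) else Xv (t.castPred h)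

/-- The `∂`-coefficient of the expression for `λ_t`. -/
def exprC {N : ℕ} (t : Fin (N + 1)) : ℂ :=
  if t = Fin.last N then -1 else 0

/-- `f` is a cochain in `C^{n+1}(A, M)` (conformal sesquilinearity, multilinearity,
and skew-symmetry with the substitution `λ_{last} ↦ λ†`). -/
structure IsCochain {n : ℕ} (DA : A →ₗ[ℂ] A) (DM : M →ₗ[ℂ] M) (f : RawC n A M) :
    Prop where
  map_add : ∀ (a : Fin (n + 1) → A) (i : Fin (n + 1)) (x y : A),
    f (Function.update a i (x + y)) =
      f (Function.update a i x) + f (Function.update a i y)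
  map_smul : ∀ (a : Fin (n + 1) → A) (i : Fin (n + 1)) (r : ℂ) (x : A),
    f (Function.update a i (r • x)) = r • f (Function.update a i x)
  sesq : ∀ (a : Fin (n + 1) → A) (i : Fin n),
    f (Function.update a i.castSucc (DA (a i.castSucc))) =
      -(monMul (Finsupp.single i 1) (f a))
  sesq_last : ∀ a : Fin (n + 1) → A,
    f (Function.update a (Fin.last n) (DA (a (Fin.last n)))) =
      (∑ i : Fin n, monMul (Finsupp.single i 1) (f a)) + mapCoeff DM (f a)
  skew : ∀ (σ : Equiv.Perm (Fin (n + 1))) (a : Fin (n + 1) → A),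
    f a = ((Equiv.Perm.sign σ : ℤˣ) : ℤ) •
      substFun DM (fun j : Fin n => exprQ (σ j.castSucc))
        (fun j : Fin n => exprC (σ j.castSucc)) (f (a ∘ σ))

/-- `(t, N-t)`-unshuffles : permutations strictly increasing on the first `t`
positions and on the remaining positions. -/
def IsUnsh {N : ℕ} (t : ℕ) (σ : Equiv.Perm (Fin N)) : Prop :=
  ∀ i j : Fin N, i < j → (j.val < t ∨ t ≤ i.val) → σ i < σ j

/-- The `⋄`-product (unshuffle-sum insertion) of cochains:
`f ∈ C^{p+1}(A,A)`, `g ∈ C^{q+1}(A,A)`, `f⋄g ∈ C^{p+q+1}(A,A)`. -/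
def diamond {p q : ℕ} (DA : A →ₗ[ℂ] A) (f : RawC p A A) (g : RawC q A A) :
    RawC (p + q) A A := fun a =>
  ∑ σ ∈ Finset.univ.filter (fun σ : Equiv.Perm (Fin (p + q + 1)) => IsUnsh (q + 1) σ),
    ((Equiv.Perm.sign σ : ℤˣ) : ℤ) •
      substFun DA
        (fun v : Fin (p + q) =>
          if v.val = q then
            ∑ i : Fin (q + 1), exprQ (σ (Fin.castLE (by omega) i))
          else exprQ (σ v.castSucc))
        (fun v : Fin (p + q) =>
          if v.val = q then
            ∑ i : Fin (q + 1), exprC (σ (Fin.castLE (by omega) i))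
          else exprC (σ v.castSucc))
        ((g fun i : Fin (q + 1) => a (σ (Fin.castLE (by omega) i))).sum fun β x =>
          monMul
            (Finsupp.mapDomain
              (fun i : Fin q => (Fin.cast (by omega) (Fin.castAdd p i) : Fin (p + q))) β)
            (renameV (fun j : Fin p => (Fin.cast (by omega) (Fin.natAdd q j) : Fin (p + q)))
              (f (Fin.cons x fun j : Fin p =>
                a (σ (Fin.cast (by omega) (Fin.natAdd (q + 1) j)))))))

/-- Transport a raw cochain along an equality of degrees. -/
def castRaw {m n : ℕ} (h : m = n) (f : RawC m A M) : RawC n A M := h ▸ f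

/-- The Nijenhuis–Richardson bracket `[f,g] = f⋄g - (-1)^{pq} g⋄f`. -/
def nr {p q : ℕ} (DA : A →ₗ[ℂ] A) (f : RawC p A A) (g : RawC q A A) :
    RawC (p + q) A A :=
  diamond DA f g - ((-1 : ℤ)) ^ (p * q) • castRaw (Nat.add_comm q p) (diamond DA g f)

end CochainDefs

section Bidegree

variable [AddCommGroup A₁] [Module ℂ A₁] [AddCommGroup A₂] [Module ℂ A₂]

/-- `x` is a pure element: in `A₁` (if `b`) or in `A₂` (if `¬b`). -/
def IsPure (x : A₁ × A₂) (b : Bool) : Prop :=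
  if b then x.2 = 0 else x.1 = 0

/-- `f ∈ C^{n+1}(A₁⊕A₂, A₁⊕A₂)` has bidegree `k|l`. -/
def HasBidegree {n : ℕ} (f : RawC n (A₁ × A₂) (A₁ × A₂)) (k l : ℤ) : Prop :=
  k + l = (n : ℤ) ∧
  ∀ (P : Fin (n + 1) → Bool) (a : Fin (n + 1) → A₁ × A₂),
    (∀ i, IsPure (a i) (P i)) →
    ((((Finset.univ.filter fun i => P i = true).card : ℤ) = k + 1 →
        ∀ β, ((f a) β).2 = 0) ∧
      ((((Finset.univ.filter fun i => P i = true).card : ℤ) = k) →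
        ∀ β, ((f a) β).1 = 0) ∧
      (((((Finset.univ.filter fun i => P i = true).card : ℤ) ≠ k + 1) ∧
        (((Finset.univ.filter fun i => P i = true).card : ℤ) ≠ k)) → f a = 0))

/-- The lift of `f ∈ C^{n+1}(A₂, A₁)` to a cochain on `A₁ ⊕ A₂`. -/
def liftC {n : ℕ} (f : RawC n A₂ A₁) : RawC n (A₁ × A₂) (A₁ × A₂) :=
  fun x => Finsupp.mapRange (fun a => (a, (0 : A₂))) rfl (f fun i => (x i).2)

/-- Recover `f ∈ C^{n+1}(A₂, A₁)` from (a lift of) a cochain on `A₁ ⊕ A₂`. -/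
def downC {n : ℕ} (g : RawC n (A₁ × A₂) (A₁ × A₂)) : RawC n A₂ A₁ :=
  fun v => Finsupp.mapRange Prod.fst rfl (g fun i => ((0 : A₁), v i))

/-- The lift of a `ℂ[∂]`-module homomorphism `H : A₂ → A₁` as a `1`-cochain on
`A₁ ⊕ A₂`. -/
def hatHom (H : A₂ →ₗ[ℂ] A₁) : RawC 0 (A₁ × A₂) (A₁ × A₂) :=
  fun x => Finsupp.single 0 (H ((x 0).2), (0 : A₂))

/-- `H : A₂ → A₁` viewed as an element of `C^1(A₂, A₁)`. -/
def hatC1 (H : A₂ →ₗ[ℂ] A₁) : RawC 0 A₂ A₁ :=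
  fun v => Finsupp.single 0 (H (v 0))

/-- The structure map of a λ-bracket as a 2-cochain. -/
def toC2 {A : Type*} [AddCommGroup A] (br : A → A → MP 1 A) : RawC 1 A A :=
  fun a => br (a 0) (a 1)

/-- `l₁ = d_{μ̂₂}` on `C^*(A₂, A₁)`. -/
def ell1 (DA : (A₁ × A₂) →ₗ[ℂ] (A₁ × A₂)) (mu2 : RawC 1 (A₁ × A₂) (A₁ × A₂))
    {n : ℕ} (f : RawC n A₂ A₁) : RawC (n + 1) A₂ A₁ :=
  downC (castRaw (show 1 + n = n + 1 by omega) (nr DA mu2 (liftC f)))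

/-- `l₂ = [·,·]_{μ̂₁}` on `C^*(A₂, A₁)`. -/
def ell2 (DA : (A₁ × A₂) →ₗ[ℂ] (A₁ × A₂)) (mu1 : RawC 1 (A₁ × A₂) (A₁ × A₂))
    {m n : ℕ} (f : RawC m A₂ A₁) (g : RawC n A₂ A₁) : RawC (m + n + 1) A₂ A₁ :=
  ((-1 : ℤ)) ^ m •
    downC (castRaw (show 1 + m + n = m + n + 1 by omega)
      (nr DA (nr DA mu1 (liftC f)) (liftC g)))

/-- `l₃ = [·,·,·]_{φ̂₁}` on `C^*(A₂, A₁)`. -/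
def ell3 (DA : (A₁ × A₂) →ₗ[ℂ] (A₁ × A₂)) (phi1 : RawC 1 (A₁ × A₂) (A₁ × A₂))
    {m n k : ℕ} (f : RawC m A₂ A₁) (g : RawC n A₂ A₁) (h : RawC k A₂ A₁) :
    RawC (m + n + k + 1) A₂ A₁ :=
  ((-1 : ℤ)) ^ n •
    downC (castRaw (show 1 + m + n + k = m + n + k + 1 by omega)
      (nr DA (nr DA (nr DA phi1 (liftC f)) (liftC g)) (liftC h)))

/-- `Π` is a twilled Lie conformal algebra structure on `A₁ ⊕ A₂`. -/
def IsTwilledStr (DA : (A₁ × A₂) →ₗ[ℂ] (A₁ × A₂))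
    (Pi : RawC 1 (A₁ × A₂) (A₁ × A₂)) : Prop :=
  IsCochain DA DA Pi ∧ nr DA Pi Pi = 0 ∧
    ∃ m1 m2 : RawC 1 (A₁ × A₂) (A₁ × A₂),
      HasBidegree m1 1 0 ∧ HasBidegree m2 0 1 ∧ Pi = m1 + m2

/-- `Π` is a quasi-twilled Lie conformal algebra structure on `A₁ ⊕ A₂`. -/
def IsQuasiTwilledStr (DA : (A₁ × A₂) →ₗ[ℂ] (A₁ × A₂))
    (Pi : RawC 1 (A₁ × A₂) (A₁ × A₂)) : Prop :=
  IsCochain DA DA Pi ∧ nr DA Pi Pi = 0 ∧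
    ∃ p1 m1 m2 : RawC 1 (A₁ × A₂) (A₁ × A₂),
      HasBidegree p1 2 (-1) ∧ HasBidegree m1 1 0 ∧ HasBidegree m2 0 1 ∧
        Pi = p1 + m1 + m2

end Bidegree

section Twist

variable [AddCommGroup A] [Module ℂ A]

/-- The twisting `Π^H = e^{X_Ĥ}(Π)` of a `2`-cochain by (the lift of) a
`ℂ[∂]`-module homomorphism. -/
def twist (DA : A →ₗ[ℂ] A) (Pi : RawC 1 A A) (hH : RawC 0 A A) : RawC 1 A A :=
  Pi + nr DA Pi hH + (2 : ℂ)⁻¹ • nr DA (nr DA Pi hH) hH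
    + (6 : ℂ)⁻¹ • nr DA (nr DA (nr DA Pi hH) hH) hH

end Twist

end LCAF

namespace LCAF

section GradedStructures

variable {A₁ A₂ : Type*} [AddCommGroup A₁] [Module ℂ A₁] [AddCommGroup A₂] [Module ℂ A₂]

/-- The subspace of `⊕ₙ RawC n A₂ A₁` cut out by `P` (placing `RawC n` in degree
`n+1`), equipped with `d` and `br`, is a differential graded Lie algebra. -/
structure IsDGLAOn
    (P : ∀ {n : ℕ}, RawC n A₂ A₁ → Prop)
    (d : ∀ {n : ℕ}, RawC n A₂ A₁ → RawC (n + 1) A₂ A₁)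
    (br : ∀ {m n : ℕ}, RawC m A₂ A₁ → RawC n A₂ A₁ → RawC (m + n + 1) A₂ A₁) :
    Prop where
  mem_zero : ∀ {n : ℕ}, P (0 : RawC n A₂ A₁)
  mem_add : ∀ {n : ℕ} (f g : RawC n A₂ A₁), P f → P g → P (f + g)
  mem_smul : ∀ {n : ℕ} (r : ℂ) (f : RawC n A₂ A₁), P f → P (r • f)
  mem_d : ∀ {n : ℕ} (f : RawC n A₂ A₁), P f → P (d f)
  mem_br : ∀ {m n : ℕ} (f : RawC m A₂ A₁) (g : RawC n A₂ A₁), P f → P g → P (br f g)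
  d_add : ∀ {n : ℕ} (f g : RawC n A₂ A₁), P f → P g → d (f + g) = d f + d g
  d_smul : ∀ {n : ℕ} (r : ℂ) (f : RawC n A₂ A₁), P f → d (r • f) = r • d f
  br_add_left : ∀ {m n : ℕ} (f f' : RawC m A₂ A₁) (g : RawC n A₂ A₁),
    P f → P f' → P g → br (f + f') g = br f g + br f' g
  br_smul_left : ∀ {m n : ℕ} (r : ℂ) (f : RawC m A₂ A₁) (g : RawC n A₂ A₁),
    P f → P g → br (r • f) g = r • br f g
  br_add_right : ∀ {m n : ℕ} (f : RawC m A₂ A₁) (g g' : RawC n A₂ A₁),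
    P f → P g → P g' → br f (g + g') = br f g + br f g'
  br_smul_right : ∀ {m n : ℕ} (r : ℂ) (f : RawC m A₂ A₁) (g : RawC n A₂ A₁),
    P f → P g → br f (r • g) = r • br f g
  d_squared : ∀ {n : ℕ} (f : RawC n A₂ A₁), P f → d (d f) = 0
  skew : ∀ {m n : ℕ} (f : RawC m A₂ A₁) (g : RawC n A₂ A₁), P f → P g →
    br f g = ((-1 : ℤ)) ^ ((m + 1) * (n + 1) + 1) •
      castRaw (show n + m + 1 = m + n + 1 by omega) (br g f)
  leibniz : ∀ {m n : ℕ} (f : RawC m A₂ A₁) (g : RawC n A₂ A₁), P f → P g →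
    castRaw (show m + n + 1 + 1 = m + n + 2 by omega) (d (br f g)) =
      castRaw (show m + 1 + n + 1 = m + n + 2 by omega) (br (d f) g) +
      ((-1 : ℤ)) ^ (m + 1) •
        castRaw (show m + (n + 1) + 1 = m + n + 2 by omega) (br f (d g))
  jacobi : ∀ {m n k : ℕ} (f : RawC m A₂ A₁) (g : RawC n A₂ A₁) (h : RawC k A₂ A₁),
    P f → P g → P h →
    castRaw (show m + (n + k + 1) + 1 = m + n + k + 2 by omega) (br f (br g h)) =
      castRaw (show m + n + 1 + k + 1 = m + n + k + 2 by omega) (br (br f g) h) +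
      ((-1 : ℤ)) ^ ((m + 1) * (n + 1)) •
        castRaw (show n + (m + k + 1) + 1 = m + n + k + 2 by omega) (br g (br f h))

/-- The subspace of `⊕ₙ RawC n A₂ A₁` cut out by `P` (placing `RawC n` in degree
`n+1`), with operations `l₁, l₂, l₃` (and `lᵢ = 0` for `i ≥ 4`), is an
`L∞`-algebra: graded skew-symmetry and the higher Jacobi identities
`∑_{i+j=n+1} (-1)^i ∑_{σ ∈ Sh(i,n-i)} χ(σ) l_j(l_i(x_{σ(1)},…),…) = 0`
(only `n = 1, …, 5` are nontrivial since `lᵢ = 0` for `i ≥ 4`). -/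
structure IsLInftyOn
    (P : ∀ {n : ℕ}, RawC n A₂ A₁ → Prop)
    (l1 : ∀ {n : ℕ}, RawC n A₂ A₁ → RawC (n + 1) A₂ A₁)
    (l2 : ∀ {m n : ℕ}, RawC m A₂ A₁ → RawC n A₂ A₁ → RawC (m + n + 1) A₂ A₁)
    (l3 : ∀ {m n k : ℕ}, RawC m A₂ A₁ → RawC n A₂ A₁ → RawC k A₂ A₁ →
      RawC (m + n + k + 1) A₂ A₁) : Prop where
  mem_zero : ∀ {n : ℕ}, P (0 : RawC n A₂ A₁)
  mem_add : ∀ {n : ℕ} (f g : RawC n A₂ A₁), P f → P g → P (f + g)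
  mem_smul : ∀ {n : ℕ} (r : ℂ) (f : RawC n A₂ A₁), P f → P (r • f)
  mem_l1 : ∀ {n : ℕ} (f : RawC n A₂ A₁), P f → P (l1 f)
  mem_l2 : ∀ {m n : ℕ} (f : RawC m A₂ A₁) (g : RawC n A₂ A₁), P f → P g → P (l2 f g)
  mem_l3 : ∀ {m n k : ℕ} (f : RawC m A₂ A₁) (g : RawC n A₂ A₁) (h : RawC k A₂ A₁),
    P f → P g → P h → P (l3 f g h)
  l1_add : ∀ {n : ℕ} (f g : RawC n A₂ A₁), P f → P g → l1 (f + g) = l1 f + l1 g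
  l1_smul : ∀ {n : ℕ} (r : ℂ) (f : RawC n A₂ A₁), P f → l1 (r • f) = r • l1 f
  l2_add_left : ∀ {m n : ℕ} (f f' : RawC m A₂ A₁) (g : RawC n A₂ A₁),
    P f → P f' → P g → l2 (f + f') g = l2 f g + l2 f' g
  l2_smul_left : ∀ {m n : ℕ} (r : ℂ) (f : RawC m A₂ A₁) (g : RawC n A₂ A₁),
    P f → P g → l2 (r • f) g = r • l2 f g
  l2_add_right : ∀ {m n : ℕ} (f : RawC m A₂ A₁) (g g' : RawC n A₂ A₁),
    P f → P g → P g' → l2 f (g + g') = l2 f g + l2 f g'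
  l2_smul_right : ∀ {m n : ℕ} (r : ℂ) (f : RawC m A₂ A₁) (g : RawC n A₂ A₁),
    P f → P g → l2 f (r • g) = r • l2 f g
  l3_add₁ : ∀ {m n k : ℕ} (f f' : RawC m A₂ A₁) (g : RawC n A₂ A₁) (h : RawC k A₂ A₁),
    P f → P f' → P g → P h → l3 (f + f') g h = l3 f g h + l3 f' g h
  l3_smul₁ : ∀ {m n k : ℕ} (r : ℂ) (f : RawC m A₂ A₁) (g : RawC n A₂ A₁)
    (h : RawC k A₂ A₁), P f → P g → P h → l3 (r • f) g h = r • l3 f g h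
  l3_add₂ : ∀ {m n k : ℕ} (f : RawC m A₂ A₁) (g g' : RawC n A₂ A₁) (h : RawC k A₂ A₁),
    P f → P g → P g' → P h → l3 f (g + g') h = l3 f g h + l3 f g' h
  l3_smul₂ : ∀ {m n k : ℕ} (r : ℂ) (f : RawC m A₂ A₁) (g : RawC n A₂ A₁)
    (h : RawC k A₂ A₁), P f → P g → P h → l3 f (r • g) h = r • l3 f g h
  l3_add₃ : ∀ {m n k : ℕ} (f : RawC m A₂ A₁) (g : RawC n A₂ A₁) (h h' : RawC k A₂ A₁),
    P f → P g → P h → P h' → l3 f g (h + h') = l3 f g h + l3 f g h'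
  l3_smul₃ : ∀ {m n k : ℕ} (r : ℂ) (f : RawC m A₂ A₁) (g : RawC n A₂ A₁)
    (h : RawC k A₂ A₁), P f → P g → P h → l3 f g (r • h) = r • l3 f g h
  skew2 : ∀ {m n : ℕ} (f : RawC m A₂ A₁) (g : RawC n A₂ A₁), P f → P g →
    l2 f g = ((-1 : ℤ)) ^ ((m + 1) * (n + 1) + 1) •
      castRaw (show n + m + 1 = m + n + 1 by omega) (l2 g f)
  skew3a : ∀ {m n k : ℕ} (f : RawC m A₂ A₁) (g : RawC n A₂ A₁) (h : RawC k A₂ A₁),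
    P f → P g → P h →
    l3 f g h = ((-1 : ℤ)) ^ ((m + 1) * (n + 1) + 1) •
      castRaw (show n + m + k + 1 = m + n + k + 1 by omega) (l3 g f h)
  skew3b : ∀ {m n k : ℕ} (f : RawC m A₂ A₁) (g : RawC n A₂ A₁) (h : RawC k A₂ A₁),
    P f → P g → P h →
    l3 f g h = ((-1 : ℤ)) ^ ((n + 1) * (k + 1) + 1) •
      castRaw (show m + k + n + 1 = m + n + k + 1 by omega) (l3 f h g)
  jac1 : ∀ {n : ℕ} (f : RawC n A₂ A₁), P f → l1 (l1 f) = 0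
  jac2 : ∀ {m n : ℕ} (f : RawC m A₂ A₁) (g : RawC n A₂ A₁), P f → P g →
    castRaw (show m + n + 1 + 1 = m + n + 2 by omega) (l1 (l2 f g))
      - castRaw (show m + 1 + n + 1 = m + n + 2 by omega) (l2 (l1 f) g)
      + ((-1 : ℤ)) ^ ((m + 1) * (n + 1)) •
          castRaw (show n + 1 + m + 1 = m + n + 2 by omega) (l2 (l1 g) f)
      = 0
  jac3 : ∀ {m n k : ℕ} (f : RawC m A₂ A₁) (g : RawC n A₂ A₁) (h : RawC k A₂ A₁),
    P f → P g → P h →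
    -(castRaw (show m + 1 + n + k + 1 = m + n + k + 2 by omega) (l3 (l1 f) g h))
      + ((-1 : ℤ)) ^ ((m + 1) * (n + 1)) •
          castRaw (show n + 1 + m + k + 1 = m + n + k + 2 by omega) (l3 (l1 g) f h)
      - ((-1 : ℤ)) ^ ((k + 1) * ((m + 1) + (n + 1))) •
          castRaw (show k + 1 + m + n + 1 = m + n + k + 2 by omega) (l3 (l1 h) f g)
      + castRaw (show m + n + 1 + k + 1 = m + n + k + 2 by omega) (l2 (l2 f g) h)
      - ((-1 : ℤ)) ^ ((n + 1) * (k + 1)) •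
          castRaw (show m + k + 1 + n + 1 = m + n + k + 2 by omega) (l2 (l2 f h) g)
      + ((-1 : ℤ)) ^ ((m + 1) * ((n + 1) + (k + 1))) •
          castRaw (show n + k + 1 + m + 1 = m + n + k + 2 by omega) (l2 (l2 g h) f)
      - castRaw (show m + n + k + 1 + 1 = m + n + k + 2 by omega) (l1 (l3 f g h))
      = 0
  jac4 : ∀ {m n k l : ℕ} (f : RawC m A₂ A₁) (g : RawC n A₂ A₁) (h : RawC k A₂ A₁)
    (e : RawC l A₂ A₁), P f → P g → P h → P e →
    castRaw (show m + n + 1 + k + l + 1 = m + n + k + l + 2 by omega) (l3 (l2 f g) h e)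
      - ((-1 : ℤ)) ^ ((n + 1) * (k + 1)) •
          castRaw (show m + k + 1 + n + l + 1 = m + n + k + l + 2 by omega)
            (l3 (l2 f h) g e)
      + ((-1 : ℤ)) ^ ((l + 1) * ((n + 1) + (k + 1))) •
          castRaw (show m + l + 1 + n + k + 1 = m + n + k + l + 2 by omega)
            (l3 (l2 f e) g h)
      + ((-1 : ℤ)) ^ ((m + 1) * ((n + 1) + (k + 1))) •
          castRaw (show n + k + 1 + m + l + 1 = m + n + k + l + 2 by omega)
            (l3 (l2 g h) f e)
      - ((-1 : ℤ)) ^ ((m + 1) * (n + 1) + (m + 1) * (l + 1) + (k + 1) * (l + 1)) •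
          castRaw (show n + l + 1 + m + k + 1 = m + n + k + l + 2 by omega)
            (l3 (l2 g e) f h)
      + ((-1 : ℤ)) ^ (((m + 1) + (n + 1)) * ((k + 1) + (l + 1))) •
          castRaw (show k + l + 1 + m + n + 1 = m + n + k + l + 2 by omega)
            (l3 (l2 h e) f g)
      - castRaw (show m + n + k + 1 + l + 1 = m + n + k + l + 2 by omega)
          (l2 (l3 f g h) e)
      + ((-1 : ℤ)) ^ ((k + 1) * (l + 1)) •
          castRaw (show m + n + l + 1 + k + 1 = m + n + k + l + 2 by omega)
            (l2 (l3 f g e) h)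
      - ((-1 : ℤ)) ^ ((n + 1) * ((k + 1) + (l + 1))) •
          castRaw (show m + k + l + 1 + n + 1 = m + n + k + l + 2 by omega)
            (l2 (l3 f h e) g)
      + ((-1 : ℤ)) ^ ((m + 1) * ((n + 1) + (k + 1) + (l + 1))) •
          castRaw (show n + k + l + 1 + m + 1 = m + n + k + l + 2 by omega)
            (l2 (l3 g h e) f)
      = 0
  jac5 : ∀ {a b c d e : ℕ} (x1 : RawC a A₂ A₁) (x2 : RawC b A₂ A₁) (x3 : RawC c A₂ A₁)
    (x4 : RawC d A₂ A₁) (x5 : RawC e A₂ A₁), P x1 → P x2 → P x3 → P x4 → P x5 →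
    castRaw (show a + b + c + 1 + d + e + 1 = a + b + c + d + e + 2 by omega)
        (l3 (l3 x1 x2 x3) x4 x5)
      - ((-1 : ℤ)) ^ ((c + 1) * (d + 1)) •
          castRaw (show a + b + d + 1 + c + e + 1 = a + b + c + d + e + 2 by omega)
            (l3 (l3 x1 x2 x4) x3 x5)
      + ((-1 : ℤ)) ^ ((e + 1) * ((c + 1) + (d + 1))) •
          castRaw (show a + b + e + 1 + c + d + 1 = a + b + c + d + e + 2 by omega)
            (l3 (l3 x1 x2 x5) x3 x4)
      + ((-1 : ℤ)) ^ ((b + 1) * ((c + 1) + (d + 1))) •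
          castRaw (show a + c + d + 1 + b + e + 1 = a + b + c + d + e + 2 by omega)
            (l3 (l3 x1 x3 x4) x2 x5)
      - ((-1 : ℤ)) ^ ((b + 1) * (c + 1) + (b + 1) * (e + 1) + (d + 1) * (e + 1)) •
          castRaw (show a + c + e + 1 + b + d + 1 = a + b + c + d + e + 2 by omega)
            (l3 (l3 x1 x3 x5) x2 x4)
      + ((-1 : ℤ)) ^ (((b + 1) + (c + 1)) * ((d + 1) + (e + 1))) •
          castRaw (show a + d + e + 1 + b + c + 1 = a + b + c + d + e + 2 by omega)
            (l3 (l3 x1 x4 x5) x2 x3)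
      - ((-1 : ℤ)) ^ ((a + 1) * ((b + 1) + (c + 1) + (d + 1))) •
          castRaw (show b + c + d + 1 + a + e + 1 = a + b + c + d + e + 2 by omega)
            (l3 (l3 x2 x3 x4) x1 x5)
      + ((-1 : ℤ)) ^ ((a + 1) * ((b + 1) + (c + 1) + (e + 1)) + (d + 1) * (e + 1)) •
          castRaw (show b + c + e + 1 + a + d + 1 = a + b + c + d + e + 2 by omega)
            (l3 (l3 x2 x3 x5) x1 x4)
      - ((-1 : ℤ)) ^ ((a + 1) * ((b + 1) + (d + 1) + (e + 1)) + (c + 1) * ((d + 1) + (e + 1))) •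
          castRaw (show b + d + e + 1 + a + c + 1 = a + b + c + d + e + 2 by omega)
            (l3 (l3 x2 x4 x5) x1 x3)
      + ((-1 : ℤ)) ^ (((a + 1) + (b + 1)) * ((c + 1) + (d + 1) + (e + 1))) •
          castRaw (show c + d + e + 1 + a + b + 1 = a + b + c + d + e + 2 by omega)
            (l3 (l3 x3 x4 x5) x1 x2)
      = 0

end GradedStructures

section TwistHom

variable {A₁ A₂ : Type*} [AddCommGroup A₁] [Module ℂ A₁] [AddCommGroup A₂] [Module ℂ A₂]

/-- `e^Ĥ = Id + Ĥ` as a linear endomorphism of `A₁ ⊕ A₂`. -/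
def eHp (H : A₂ →ₗ[ℂ] A₁) : (A₁ × A₂) →ₗ[ℂ] (A₁ × A₂) :=
  LinearMap.id + (LinearMap.inl ℂ A₁ A₂).comp (H.comp (LinearMap.snd ℂ A₁ A₂))

/-- `e^{-Ĥ} = Id - Ĥ` as a linear endomorphism of `A₁ ⊕ A₂`. -/
def eHm (H : A₂ →ₗ[ℂ] A₁) : (A₁ × A₂) →ₗ[ℂ] (A₁ × A₂) :=
  LinearMap.id - (LinearMap.inl ℂ A₁ A₂).comp (H.comp (LinearMap.snd ℂ A₁ A₂))

end TwistHom

end LCAF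

/-!
Expanding `∘` and `∨` into `≻, ≺, ⋎`, the first NS-Lie identity says
`a ∘ (b ∘ c) - b ∘ (a ∘ c) = [a, b] ∘ c`. By the first three axioms,
`a ∘ (b ∘ c) = (a × b) ≻ c - (a ≻ c) ≺ b - (b ≻ c) ≺ a + c ≺ (b × a)`, and antisymmetrising in
`a, b` gives `[a, b] ∘ c` because `[a, b] = a × b - b × a`. The second identity is the alternating
sum of the fourth axiom over the permutations of `(a, b, c)`.

With λ-brackets, each term is an affine substitution `(λ, μ) ↦ S (λ, μ) + t ∂` applied to
`x F_λ p(μ)` or to `p(λ) F_{λ+μ} z`, and substitutions compose by matrix multiplication. Once the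
axioms are used to eliminate `x ≻ (y ≻ z)`, `(x ≺ y) ≺ z`, `x ≻ (y ≺ z)` and `x ≻ (y ⋎ z)`, both
identities cancel term by term.
-/

theorem List.prod_ofFn_pow_single_add {R : Type*} [Monoid R] {k : ℕ} (L : Fin k → R)
    (hL : ∀ i j, Commute (L i) (L j)) (n : Fin k → ℕ) (i : Fin k) :
    (List.ofFn fun j => L j ^ (Pi.single i 1 + n : Fin k → ℕ) j).prod =
      L i * (List.ofFn fun j => L j ^ n j).prod := by
  induction k with
  | zero => exact i.elim0
  | succ k ih =>
    simp only [List.ofFn_succ, List.prod_cons, Pi.add_apply]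
    cases i using Fin.cases with
    | zero => simp [pow_succ', mul_assoc, add_comm 1]
    | succ i =>
      have h := ih (fun j => L j.succ) (fun _ _ => hL _ _) (fun j => n j.succ) i
      simp only [Pi.add_apply, Pi.single_apply] at h
      simp only [Pi.single_apply, (Fin.succ_ne_zero i).symm, if_false, zero_add, Fin.succ_inj, h,
        ((hL 0 i.succ).pow_left _).left_comm]

theorem List.foldr_comp_map_coe {X : Type*} [AddCommGroup X] [Module ℂ X]
    (l : List (Module.End ℂ X)) : (l.map (⇑)).foldr (· ∘ ·) id = ⇑l.prod := by
  induction l with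
  | nil => rfl
  | cons f l ih => simp [ih, Module.End.mul_eq_comp]

theorem LinearMap.comp_list_prod_ofFn {X Y : Type*} [AddCommGroup X] [Module ℂ X]
    [AddCommGroup Y] [Module ℂ Y] {k : ℕ} (T : X →ₗ[ℂ] Y) (A : Fin k → Module.End ℂ X)
    (B : Fin k → Module.End ℂ Y) (h : ∀ i, T ∘ₗ A i = B i ∘ₗ T) (n : Fin k → ℕ) :
    T ∘ₗ (List.ofFn fun i => A i ^ n i).prod = (List.ofFn fun i => B i ^ n i).prod ∘ₗ T := by
  induction k with
  | zero => rfl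
  | succ k ih =>
    have hpow : ∀ m, T ∘ₗ (A 0 ^ m) = (B 0 ^ m) ∘ₗ T := fun m => by
      induction m with
      | zero => rfl
      | succ m ihm =>
        rw [pow_succ, pow_succ, Module.End.mul_eq_comp, Module.End.mul_eq_comp,
          ← LinearMap.comp_assoc, ihm, LinearMap.comp_assoc, h, LinearMap.comp_assoc]
    simp only [List.ofFn_succ, List.prod_cons, Module.End.mul_eq_comp]
    rw [← LinearMap.comp_assoc, hpow, LinearMap.comp_assoc,
      ih (fun i => A i.succ) (fun i => B i.succ) (fun i => h _), LinearMap.comp_assoc]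

namespace LCAF

section Polynomials

variable {M N : Type*} [AddCommGroup M] [AddCommGroup N] {k k' : ℕ}

lemma monMul_single (α β : Fin k →₀ ℕ) (m : M) :
    monMul α (Finsupp.single β m) = Finsupp.single (α + β) m := Finsupp.mapDomain_single

lemma zero_monMul (p : MP k M) : monMul 0 p = p := by
  simp only [monMul, zero_add]
  exact Finsupp.mapDomain_id

lemma monMul_monMul (α β : Fin k →₀ ℕ) (p : MP k M) :
    monMul α (monMul β p) = monMul (α + β) p := by
  simp only [monMul, ← Finsupp.mapDomain_comp]
  exact Finsupp.mapDomain_congr fun γ _ => (add_assoc α β γ).symm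

lemma renameV_add (h : Fin k → Fin k') (p q : MP k M) :
    renameV h (p + q) = renameV h p + renameV h q := Finsupp.mapDomain_add

variable [Module ℂ M] [Module ℂ N]

def monMulₗ (α : Fin k →₀ ℕ) : MP k M →ₗ[ℂ] MP k M := Finsupp.lmapDomain M ℂ (α + ·)

lemma monMul_add (α : Fin k →₀ ℕ) (p q : MP k M) :
    monMul α (p + q) = monMul α p + monMul α q := map_add (monMulₗ α) p q

lemma monMul_sub (α : Fin k →₀ ℕ) (p q : MP k M) :
    monMul α (p - q) = monMul α p - monMul α q := map_sub (monMulₗ α) p q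

lemma monMul_smul (α : Fin k →₀ ℕ) (r : ℂ) (p : MP k M) :
    monMul α (r • p) = r • monMul α p := map_smul (monMulₗ α) r p

def mapCoeffₗ (g : M →ₗ[ℂ] N) : MP k M →ₗ[ℂ] MP k N := Finsupp.mapRange.linearMap g

lemma mapCoeff_add (g : M →ₗ[ℂ] N) (p q : MP k M) :
    mapCoeff g (p + q) = mapCoeff g p + mapCoeff g q := map_add (mapCoeffₗ g) p q

lemma mapCoeff_sub (g : M →ₗ[ℂ] N) (p q : MP k M) :
    mapCoeff g (p - q) = mapCoeff g p - mapCoeff g q := map_sub (mapCoeffₗ g) p q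

lemma mapCoeff_smul (g : M →ₗ[ℂ] N) (r : ℂ) (p : MP k M) :
    mapCoeff g (r • p) = r • mapCoeff g p := map_smul (mapCoeffₗ g) r p

lemma mapCoeff_single (g : M →ₗ[ℂ] N) (β : Fin k →₀ ℕ) (m : M) :
    mapCoeff g (Finsupp.single β m) = Finsupp.single β (g m) := Finsupp.mapRange_single

lemma mapCoeff_monMul (g : M →ₗ[ℂ] N) (α : Fin k →₀ ℕ) (p : MP k M) :
    mapCoeff g (monMul α p) = monMul α (mapCoeff g p) := by
  induction p using Finsupp.induction_linear with
  | zero => simp [mapCoeff, monMul]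
  | add p q hp hq => rw [monMul_add, mapCoeff_add, hp, hq, mapCoeff_add, monMul_add]
  | single β m => rw [monMul_single, mapCoeff_single, mapCoeff_single, monMul_single]

def scalePₗ (q : MP k ℂ) : MP k M →ₗ[ℂ] MP k M := q.sum fun α r => r • monMulₗ α

lemma scalePₗ_apply (q : MP k ℂ) (p : MP k M) : scalePₗ q p = scaleP q p := by
  simp only [scalePₗ, scaleP, LinearMap.finsupp_sum_apply, LinearMap.smul_apply]
  rfl

lemma scaleP_add (q : MP k ℂ) (p p' : MP k M) :
    scaleP q (p + p') = scaleP q p + scaleP q p' := by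
  simp only [← scalePₗ_apply, map_add]

lemma scaleP_zero (q : MP k ℂ) : scaleP q (0 : MP k M) = 0 := by
  simp only [← scalePₗ_apply, map_zero]

lemma scaleP_smul (q : MP k ℂ) (r : ℂ) (p : MP k M) :
    scaleP q (r • p) = r • scaleP q p := by
  simp only [← scalePₗ_apply, map_smul]

lemma add_scaleP (q q' : MP k ℂ) (p : MP k M) :
    scaleP (q + q') p = scaleP q p + scaleP q' p :=
  Finsupp.sum_add_index' (fun _ => zero_smul ℂ _) fun α r r' => add_smul r r' (monMul α p)

lemma smul_scaleP (r : ℂ) (q : MP k ℂ) (p : MP k M) :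
    scaleP (r • q) p = r • scaleP q p := by
  rw [scaleP, Finsupp.sum_smul_index' (h := fun α r => r • monMul α p) fun _ => zero_smul ℂ _,
    scaleP, Finsupp.smul_sum]
  simp only [smul_eq_mul, mul_smul]

lemma sum_scaleP {ι : Type*} (s : Finset ι) (q : ι → MP k ℂ) (p : MP k M) :
    scaleP (∑ i ∈ s, q i) p = ∑ i ∈ s, scaleP (q i) p :=
  map_sum (AddMonoidHom.mk' (scaleP · p) fun q q' => add_scaleP q q' p) q s

lemma scaleP_Xv (i : Fin k) (p : MP k M) :
    scaleP (Xv i) p = monMul (Finsupp.single i 1) p := by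
  simp [Xv, scaleP]

lemma scaleP_monMul (q : MP k ℂ) (α : Fin k →₀ ℕ) (p : MP k M) :
    scaleP q (monMul α p) = monMul α (scaleP q p) := by
  calc scaleP q (monMul α p) = q.sum fun β r => monMulₗ α (r • monMul β p) :=
        Finsupp.sum_congr fun β _ => by
          rw [map_smul, monMulₗ, Finsupp.lmapDomain_apply]
          simp only [← monMul.eq_def, monMul_monMul, add_comm]
    _ = monMul α (scaleP q p) := (map_finsuppSum (monMulₗ α) q _).symm

lemma scaleP_comm (q q' : MP k ℂ) (p : MP k M) :
    scaleP q (scaleP q' p) = scaleP q' (scaleP q p) := by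
  calc scaleP q (scaleP q' p) = q.sum fun β r => scalePₗ q' (r • monMul β p) :=
        Finsupp.sum_congr fun β _ => by
          rw [map_smul, scalePₗ_apply, scaleP_monMul]
    _ = scaleP q' (scaleP q p) := by
          rw [← map_finsuppSum, scalePₗ_apply]; rfl

lemma scaleP_mapCoeff (g : M →ₗ[ℂ] N) (q : MP k ℂ) (p : MP k M) :
    scaleP q (mapCoeff g p) = mapCoeff g (scaleP q p) := by
  calc scaleP q (mapCoeff g p) = q.sum fun β r => mapCoeffₗ g (r • monMul β p) :=
        Finsupp.sum_congr fun β _ => by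
          rw [map_smul, mapCoeffₗ, Finsupp.mapRange.linearMap_apply]
          simp only [← mapCoeff.eq_def, mapCoeff_monMul]
    _ = mapCoeff g (scaleP q p) := (map_finsuppSum (mapCoeffₗ g) q _).symm

def opndₗ (D : M →ₗ[ℂ] M) (q : MP k ℂ) (c : ℂ) : Module.End ℂ (MP k M) :=
  scalePₗ q + c • mapCoeffₗ D

lemma opndₗ_apply (D : M →ₗ[ℂ] M) (q : MP k ℂ) (c : ℂ) (p : MP k M) :
    opndₗ D q c p = opnd D q c p := by
  simp only [opndₗ, LinearMap.add_apply, scalePₗ_apply, LinearMap.smul_apply, opnd, add_right_inj]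
  rfl

lemma commute_mapCoeffₗ_opndₗ (D : M →ₗ[ℂ] M) (q : MP k ℂ) (c : ℂ) :
    Commute (mapCoeffₗ D) (opndₗ D q c) := by
  refine LinearMap.ext fun p => ?_
  simp only [Module.End.mul_apply, opndₗ_apply, opnd, mapCoeffₗ,
    Finsupp.mapRange.linearMap_apply, ← mapCoeff.eq_def, mapCoeff_add, mapCoeff_smul,
    scaleP_mapCoeff]

lemma commute_opndₗ (D : M →ₗ[ℂ] M) (q q' : MP k ℂ) (c c' : ℂ) :
    Commute (opndₗ D q c) (opndₗ D q' c') := by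
  refine LinearMap.ext fun p => ?_
  simp only [Module.End.mul_apply, opndₗ_apply, opnd, scaleP_add, scaleP_smul, scaleP_mapCoeff,
    mapCoeff_add, mapCoeff_smul, scaleP_comm q q', smul_add, smul_comm c c']
  abel

end Polynomials

section Substitution

variable {M : Type*} [AddCommGroup M] [Module ℂ M] {k k' : ℕ} (D : M →ₗ[ℂ] M)

def substₗ (q : Fin k → MP k' ℂ) (c : Fin k → ℂ) : MP k M →ₗ[ℂ] MP k' M :=
  Finsupp.lsum ℂ fun α =>
    (List.ofFn fun i => opndₗ D (q i) (c i) ^ α i).prod ∘ₗ Finsupp.lsingle 0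

lemma substₗ_apply (q : Fin k → MP k' ℂ) (c : Fin k → ℂ) (p : MP k M) :
    substₗ D q c p = substFun D q c p := by
  simp only [substₗ, Finsupp.lsum_apply]
  refine Finsupp.sum_congr fun α _ => ?_
  have : (List.ofFn fun i => (opnd D (q i) (c i))^[α i]) =
      (List.ofFn fun i => opndₗ D (q i) (c i) ^ α i).map (⇑) := by
    simp [List.map_ofFn, Function.comp_def, Module.End.coe_pow, funext (opndₗ_apply D _ _)]
  rw [this, List.foldr_comp_map_coe]
  rfl

variable (q : Fin k → MP k' ℂ) (c : Fin k → ℂ)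

lemma substFun_add (p p' : MP k M) :
    substFun D q c (p + p') = substFun D q c p + substFun D q c p' := by
  simp only [← substₗ_apply, map_add]

lemma substFun_sub (p p' : MP k M) :
    substFun D q c (p - p') = substFun D q c p - substFun D q c p' := by
  simp only [← substₗ_apply, map_sub]

lemma substFun_zero : substFun D q c (0 : MP k M) = 0 := by
  simp only [← substₗ_apply, map_zero]

lemma substFun_smul (r : ℂ) (p : MP k M) : substFun D q c (r • p) = r • substFun D q c p := by
  simp only [← substₗ_apply, map_smul]

lemma substFun_single_zero (m : M) :
    substFun D q c (Finsupp.single 0 m) = Finsupp.single 0 m := by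
  simp [← substₗ_apply, substₗ]

lemma substFun_mapCoeff (p : MP k M) :
    substFun D q c (mapCoeff D p) = mapCoeff D (substFun D q c p) := by
  suffices substₗ D q c ∘ₗ mapCoeffₗ D = mapCoeffₗ D ∘ₗ substₗ D q c by
    have h := LinearMap.congr_fun this p
    rwa [LinearMap.comp_apply, LinearMap.comp_apply, substₗ_apply, substₗ_apply] at h
  refine Finsupp.lhom_ext fun α m => ?_
  have hcomm : Commute (mapCoeffₗ D) (List.ofFn fun i => opndₗ D (q i) (c i) ^ α i).prod :=
    Commute.list_prod_right _ _ fun f hf => by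
      obtain ⟨i, rfl⟩ := List.mem_ofFn.mp hf
      exact (commute_mapCoeffₗ_opndₗ D _ _).pow_right _
  simpa [substₗ, mapCoeffₗ, ← mapCoeff.eq_def, mapCoeff_single] using
    (LinearMap.congr_fun hcomm (Finsupp.single 0 m)).symm

lemma substFun_monMul_single (i : Fin k) (p : MP k M) :
    substFun D q c (monMul (Finsupp.single i 1) p) = opnd D (q i) (c i) (substFun D q c p) := by
  suffices substₗ D q c ∘ₗ monMulₗ (Finsupp.single i 1) = opndₗ D (q i) (c i) ∘ₗ substₗ D q c by
    have h := LinearMap.congr_fun this p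
    rwa [LinearMap.comp_apply, LinearMap.comp_apply, substₗ_apply, substₗ_apply,
      opndₗ_apply] at h
  refine Finsupp.lhom_ext fun α m => ?_
  have hprod := List.prod_ofFn_pow_single_add (fun j => opndₗ D (q j) (c j))
    (fun _ _ => commute_opndₗ D _ _ _ _) α i
  simp only [substₗ, monMulₗ, LinearMap.comp_apply, Finsupp.lsingle_apply, Finsupp.lmapDomain_apply,
    Finsupp.mapDomain_single, Finsupp.lsum_single]
  rw [Finsupp.coe_add, Finsupp.single_eq_pi_single, hprod, Module.End.mul_apply]

lemma substFun_monMul_single_iterate (i : Fin k) (n : ℕ) (p : MP k M) :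
    substFun D q c (monMul (Finsupp.single i n) p) =
      (opnd D (q i) (c i))^[n] (substFun D q c p) := by
  induction n with
  | zero => simp [zero_monMul]
  | succ n ih =>
    rw [Function.iterate_succ_apply', ← ih, ← substFun_monMul_single, monMul_monMul,
      ← Finsupp.single_add, add_comm]

end Substitution

section AffineSubstitution

open scoped Matrix

variable {M : Type*} [AddCommGroup M] [Module ℂ M] {k k' k'' : ℕ} (D : M →ₗ[ℂ] M)

def linComb (r : Fin k → ℂ) : MP k ℂ := ∑ j, r j • Xv j

lemma linComb_add (r s : Fin k → ℂ) : linComb (r + s) = linComb r + linComb s := by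
  simp [linComb, add_smul, Finset.sum_add_distrib]

lemma linComb_smul (a : ℂ) (r : Fin k → ℂ) : linComb (a • r) = a • linComb r := by
  simp [linComb, Finset.smul_sum, mul_smul]

def affSubst (S : Matrix (Fin k) (Fin k') ℂ) (t : Fin k → ℂ) (p : MP k M) : MP k' M :=
  substFun D (fun i => linComb (S i)) t p

lemma affSubst_add (S : Matrix (Fin k) (Fin k') ℂ) (t : Fin k → ℂ) (p q : MP k M) :
    affSubst D S t (p + q) = affSubst D S t p + affSubst D S t q := substFun_add D _ t p q

lemma affSubst_sub (S : Matrix (Fin k) (Fin k') ℂ) (t : Fin k → ℂ) (p q : MP k M) :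
    affSubst D S t (p - q) = affSubst D S t p - affSubst D S t q := substFun_sub D _ t p q

lemma affSubst_single_zero (S : Matrix (Fin k) (Fin k') ℂ) (t : Fin k → ℂ) (m : M) :
    affSubst D S t (Finsupp.single 0 m) = Finsupp.single 0 m := substFun_single_zero D _ t m

lemma affSubst_monMul_single_iterate (S : Matrix (Fin k) (Fin k') ℂ) (t : Fin k → ℂ) (i : Fin k)
    (n : ℕ) (p : MP k M) :
    affSubst D S t (monMul (Finsupp.single i n) p) =
      (opnd D (linComb (S i)) (t i))^[n] (affSubst D S t p) :=
  substFun_monMul_single_iterate D _ t i n p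

lemma substFun_opnd_linComb (Q : Fin k → MP k' ℂ) (C : Fin k → ℂ) (r : Fin k → ℂ) (c : ℂ)
    (p : MP k M) :
    substFun D Q C (opnd D (linComb r) c p) =
      opnd D (∑ j, r j • Q j) (∑ j, r j * C j + c) (substFun D Q C p) := by
  simp only [opnd, linComb, sum_scaleP, smul_scaleP, scaleP_Xv, ← substₗ_apply, map_add,
    map_sum, map_smul]
  simp only [substₗ_apply, substFun_monMul_single, substFun_mapCoeff, opnd, smul_add,
    Finset.sum_add_distrib, add_smul, Finset.sum_smul, mul_smul, add_assoc]

lemma linComb_mul_apply (S' : Matrix (Fin k) (Fin k') ℂ) (S : Matrix (Fin k') (Fin k'') ℂ)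
    (i : Fin k) : linComb ((S' * S) i) = ∑ j, S' i j • linComb (S j) := by
  simp only [linComb, Matrix.mul_apply, Finset.sum_smul, Finset.smul_sum, mul_smul]
  exact Finset.sum_comm

lemma affSubst_affSubst (S : Matrix (Fin k') (Fin k'') ℂ) (t : Fin k' → ℂ)
    (S' : Matrix (Fin k) (Fin k') ℂ) (t' : Fin k → ℂ) (p : MP k M) :
    affSubst D S t (affSubst D S' t' p) = affSubst D (S' * S) (S' *ᵥ t + t') p := by
  suffices substₗ D (fun i => linComb (S i)) t ∘ₗ substₗ D (fun i => linComb (S' i)) t' =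
      substₗ D (fun i => linComb ((S' * S) i)) (S' *ᵥ t + t') by
    have h := LinearMap.congr_fun this p
    rwa [LinearMap.comp_apply, substₗ_apply, substₗ_apply, substₗ_apply] at h
  refine Finsupp.lhom_ext fun α m => ?_
  have hint : ∀ i, substₗ D (fun i => linComb (S i)) t ∘ₗ opndₗ D (linComb (S' i)) (t' i) =
      opndₗ D (linComb ((S' * S) i)) ((S' *ᵥ t + t') i) ∘ₗ substₗ D (fun i => linComb (S i)) t :=
    fun i => LinearMap.ext fun w => by
      simp only [LinearMap.comp_apply, substₗ_apply, opndₗ_apply, substFun_opnd_linComb,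
        linComb_mul_apply, Pi.add_apply, Matrix.mulVec, dotProduct]
  have h := LinearMap.congr_fun (LinearMap.comp_list_prod_ofFn _ _ _ hint α) (Finsupp.single 0 m)
  have hsingle : ∀ {k₀ k₁ : ℕ} (Q : Fin k₀ → MP k₁ ℂ) (C : Fin k₀ → ℂ) (β : Fin k₀ →₀ ℕ),
      substₗ D Q C (Finsupp.single β m) =
        (List.ofFn fun i => opndₗ D (Q i) (C i) ^ β i).prod (Finsupp.single 0 m) := by
    intros; simp [substₗ]
  simp only [LinearMap.comp_apply, substₗ_apply, substFun_single_zero] at h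
  simp only [LinearMap.comp_apply, hsingle, substₗ_apply, h]

lemma opnd_Xv_zero (j : Fin k) (p : MP k M) :
    opnd D (Xv j) 0 p = monMul (Finsupp.single j 1) p := by
  simp [opnd, scaleP_Xv]

lemma linComb_single (j : Fin k) : linComb (Pi.single j 1) = Xv j := by
  simp [linComb, Pi.single_apply]

lemma renameV_const_eq_affSubst (j : Fin k) (p : MP 1 M) :
    renameV (fun _ => j) p = affSubst D (Matrix.of fun _ => Pi.single j 1) 0 p := by
  induction p using Finsupp.induction_linear with
  | zero => simp [renameV, affSubst, substFun_zero]
  | add p q hp hq => rw [renameV_add, affSubst_add, hp, hq]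
  | single α m =>
    have hiter : ∀ n : ℕ, (opnd D (Xv j) 0)^[n] (Finsupp.single 0 m) =
        Finsupp.single (Finsupp.single j n) m := fun n => by
      induction n with
      | zero => simp
      | succ n ih => rw [Function.iterate_succ_apply', ih, opnd_Xv_zero, monMul_single,
          ← Finsupp.single_add, add_comm 1 n]
    obtain ⟨n, rfl⟩ : ∃ n, α = Finsupp.single 0 n := ⟨α 0, Finsupp.unique_single α⟩
    calc renameV (fun _ => j) (Finsupp.single (Finsupp.single 0 n) m)
        = Finsupp.single (Finsupp.single j n) m := by simp [renameV]
      _ = affSubst D (Matrix.of fun _ => Pi.single j 1) 0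
          (monMul (Finsupp.single (0 : Fin 1) n) (Finsupp.single 0 m)) := by
        rw [affSubst, substFun_monMul_single_iterate, substFun_single_zero, ← hiter,
          ← linComb_single]
        rfl
      _ = _ := by rw [monMul_single, add_zero]

end AffineSubstitution

section OneVariable

variable {M : Type*} [AddCommGroup M] [Module ℂ M] (D : M →ₗ[ℂ] M)

lemma sub1_eq_affSubst (p : MP 1 M) : sub1 D p = affSubst D !![-1] ![-1] p := by
  unfold sub1 affSubst
  congr 1 <;> funext i <;> fin_cases i <;> simp [linComb]

lemma affSubst_one_fin_one (p : MP 1 M) : affSubst D !![1] ![0] p = p := by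
  have hid : renameV (fun _ : Fin 1 => (0 : Fin 1)) p = p := by
    simp only [renameV, Subsingleton.elim (fun _ : Fin 1 => (0 : Fin 1)) id, Finsupp.mapDomain_id]
    exact Finsupp.mapDomain_id
  refine Eq.trans ?_ hid
  rw [renameV_const_eq_affSubst]
  congr 1
  · ext i j; fin_cases i; fin_cases j; rfl
  · ext i; fin_cases i; rfl

lemma sub1_sub1 (p : MP 1 M) : sub1 D (sub1 D p) = p := by
  rw [sub1_eq_affSubst, sub1_eq_affSubst, affSubst_affSubst]
  convert affSubst_one_fin_one D p using 2
  · ext i j; fin_cases i; fin_cases j; simp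
  · ext i; fin_cases i; simp

lemma sub1_add (p q : MP 1 M) : sub1 D (p + q) = sub1 D p + sub1 D q := substFun_add D _ _ p q

lemma sub1_sub (p q : MP 1 M) : sub1 D (p - q) = sub1 D p - sub1 D q := substFun_sub D _ _ p q

lemma sub1_neg (p : MP 1 M) : sub1 D (-p) = -sub1 D p := by
  simp only [sub1, ← substₗ_apply, map_neg]

lemma sub1_smul (r : ℂ) (p : MP 1 M) : sub1 D (r • p) = r • sub1 D p := substFun_smul D _ _ r p

lemma sub1_mapCoeff (p : MP 1 M) : sub1 D (mapCoeff D p) = mapCoeff D (sub1 D p) :=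
  substFun_mapCoeff D _ _ p

lemma sub1_monMul_lam1 (p : MP 1 M) :
    sub1 D (monMul lam1 p) = -monMul lam1 (sub1 D p) - mapCoeff D (sub1 D p) := by
  rw [sub1, lam1, substFun_monMul_single, ← sub1, opnd, ← neg_one_smul ℂ (Xv 0), smul_scaleP,
    scaleP_Xv]
  module

lemma renameV_zero_eq_affSubst (p : MP 1 M) :
    renameV (fun _ => (0 : Fin 2)) p = affSubst D !![1, 0] ![0] p := by
  rw [renameV_const_eq_affSubst]
  congr 1
  · ext i j; fin_cases i; fin_cases j <;> rfl
  · ext i; fin_cases i; rfl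

lemma renameV_one_eq_affSubst (p : MP 1 M) :
    renameV (fun _ => (1 : Fin 2)) p = affSubst D !![0, 1] ![0] p := by
  rw [renameV_const_eq_affSubst]
  congr 1
  · ext i j; fin_cases i; fin_cases j <;> rfl
  · ext i; fin_cases i; rfl

lemma affSubst_sub1 (a b d : ℂ) (p : MP 1 M) :
    affSubst D !![a, b] ![d] (sub1 D p) = affSubst D !![-a, -b] ![-d - 1] p := by
  rw [sub1_eq_affSubst, affSubst_affSubst]
  congr 1
  · ext i j; fin_cases i; fin_cases j <;> simp
  · ext i; fin_cases i; simp [sub_eq_add_neg]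

end OneVariable

section Composites

variable {A : Type*} [AddCommGroup A] [Module ℂ A] (D : A →ₗ[ℂ] A)

lemma affSubst_opE_Xv_zero (F : A → A → MP 1 A) (M : Matrix (Fin 2) (Fin 2) ℂ) (v : Fin 2 → ℂ)
    (a b : A) : affSubst D M v (opE D F (Xv 0) 0 a b) = opE D F (linComb (M 0)) (v 0) a b := by
  have hXv : opE D F (Xv 0) 0 a b =
      affSubst D (Matrix.of fun _ => Pi.single 0 1) (fun _ => 0) (F a b) := by
    rw [← linComb_single]; rfl
  rw [hXv, affSubst_affSubst]
  congr 1
  · ext i j; simp [Matrix.mul_apply, Pi.single_apply]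
  · ext i; simp [Matrix.mulVec, dotProduct, Pi.single_apply]

section OpR

variable {F : A → A → MP 1 A} {a : A} (q : MP 2 ℂ) (c : ℂ)

def opRₗ (hlin : IsLinearMap ℂ (F a)) : MP 2 A →ₗ[ℂ] MP 2 A :=
  Finsupp.lsum ℂ fun β => monMulₗ β ∘ₗ substₗ D (fun _ => q) (fun _ => c) ∘ₗ hlin.mk' (F a)

lemma opRₗ_apply (hlin : IsLinearMap ℂ (F a)) (p : MP 2 A) :
    opRₗ D q c hlin p = opR D F q c a p := by
  simp only [opRₗ, Finsupp.lsum_apply]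
  refine Finsupp.sum_congr fun β _ => ?_
  simp only [LinearMap.comp_apply, IsLinearMap.mk'_apply, substₗ_apply]
  rfl

lemma opR_add (hlin : IsLinearMap ℂ (F a)) (p p' : MP 2 A) :
    opR D F q c a (p + p') = opR D F q c a p + opR D F q c a p' := by
  simp only [← opRₗ_apply D q c hlin, map_add]

lemma opR_sub (hlin : IsLinearMap ℂ (F a)) (p p' : MP 2 A) :
    opR D F q c a (p - p') = opR D F q c a p - opR D F q c a p' := by
  simp only [← opRₗ_apply D q c hlin, map_sub]

lemma opR_zero (hlin : IsLinearMap ℂ (F a)) : opR D F q c a 0 = 0 := by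
  simp only [← opRₗ_apply D q c hlin, map_zero]

lemma opR_smul (hlin : IsLinearMap ℂ (F a)) (r : ℂ) (p : MP 2 A) :
    opR D F q c a (r • p) = r • opR D F q c a p := by
  simp only [← opRₗ_apply D q c hlin, map_smul]

lemma opR_single (hlin : IsLinearMap ℂ (F a)) (β : Fin 2 →₀ ℕ) (x : A) :
    opR D F q c a (Finsupp.single β x) = monMul β (opE D F q c a x) := by
  rw [← opRₗ_apply D q c hlin]
  simp only [opRₗ, Finsupp.lsum_single, LinearMap.comp_apply, IsLinearMap.mk'_apply, substₗ_apply]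
  rfl

lemma opR_monMul (hlin : IsLinearMap ℂ (F a)) (γ : Fin 2 →₀ ℕ) (p : MP 2 A) :
    opR D F q c a (monMul γ p) = monMul γ (opR D F q c a p) := by
  induction p using Finsupp.induction_linear with
  | zero => simp [monMul, opR_zero D q c hlin]
  | add p p' hp hp' =>
    rw [monMul_add, opR_add D q c hlin, hp, hp', opR_add D q c hlin, monMul_add]
  | single β x =>
    rw [monMul_single, opR_single D q c hlin, opR_single D q c hlin, monMul_monMul]

lemma opR_scaleP (hlin : IsLinearMap ℂ (F a)) (Q : MP 2 ℂ) (p : MP 2 A) :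
    opR D F q c a (scaleP Q p) = scaleP Q (opR D F q c a p) := by
  simp only [scaleP, ← opRₗ_apply D q c hlin, map_finsuppSum, map_smul]
  simp only [opRₗ_apply D q c hlin, opR_monMul D q c hlin]

variable {e f : ℂ}

-- For `(e, f) = (1, 1)` the hypothesis `hD` is right sesquilinearity. Since `opL` is `opR` of
-- the swapped product, left sesquilinearity enters as the case `(e, f) = (-1, 0)`.
lemma opE_map_D (hD : ∀ b, F a (D b) = e • monMul lam1 (F a b) + f • mapCoeff D (F a b)) (x : A) :
    opE D F q c a (D x) =
      e • scaleP q (opE D F q c a x) + (e * c + f) • mapCoeff D (opE D F q c a x) := by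
  rw [opE, hD, substFun_add, substFun_smul, substFun_smul, lam1, substFun_monMul_single,
    substFun_mapCoeff, opnd, ← opE]
  module

lemma opR_mapCoeff (hlin : IsLinearMap ℂ (F a))
    (hD : ∀ b, F a (D b) = e • monMul lam1 (F a b) + f • mapCoeff D (F a b)) (p : MP 2 A) :
    opR D F q c a (mapCoeff D p) =
      e • scaleP q (opR D F q c a p) + (e * c + f) • mapCoeff D (opR D F q c a p) := by
  induction p using Finsupp.induction_linear with
  | zero => simp [mapCoeff, scaleP_zero, opR_zero D q c hlin]
  | add p p' hp hp' =>
    rw [mapCoeff_add, opR_add D q c hlin, hp, hp', opR_add D q c hlin, scaleP_add, mapCoeff_add]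
    module
  | single β x =>
    rw [mapCoeff_single, opR_single D q c hlin, opR_single D q c hlin, opE_map_D D q c hD,
      monMul_add, monMul_smul, monMul_smul, scaleP_monMul, mapCoeff_monMul]

lemma opR_opnd (hlin : IsLinearMap ℂ (F a))
    (hD : ∀ b, F a (D b) = e • monMul lam1 (F a b) + f • mapCoeff D (F a b))
    (Q : MP 2 ℂ) (C : ℂ) (p : MP 2 A) :
    opR D F q c a (opnd D Q C p) =
      opnd D (Q + (C * e) • q) (C * (e * c + f)) (opR D F q c a p) := by
  rw [opnd, opR_add D q c hlin, opR_scaleP D q c hlin, opR_smul D q c hlin,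
    opR_mapCoeff D q c hlin hD, opnd, add_scaleP, smul_scaleP]
  module

end OpR

-- `nestRight D F x p` is `x F_λ p(μ)` and `nestLeft D F p z` is `p(λ) F_{λ+μ} z`.
def nestRight (F : A → A → MP 1 A) (x : A) (p : MP 1 A) : MP 2 A :=
  opR D F (Xv 0) 0 x (renameV (fun _ => 1) p)

def nestLeft (F : A → A → MP 1 A) (p : MP 1 A) (z : A) : MP 2 A :=
  opL D F (Xv 0 + Xv 1) 0 (renameV (fun _ => 0) p) z

section RightNormalForm

variable {F : A → A → MP 1 A} {a : A} {e f : ℂ}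

lemma nestRight_add (hlin : IsLinearMap ℂ (F a)) (p p' : MP 1 A) :
    nestRight D F a (p + p') = nestRight D F a p + nestRight D F a p' := by
  rw [nestRight, renameV_add, opR_add D _ _ hlin]; rfl

lemma opR_linComb_affSubst (hlin : IsLinearMap ℂ (F a))
    (hD : ∀ b, F a (D b) = e • monMul lam1 (F a b) + f • mapCoeff D (F a b))
    (r : Fin 2 → ℂ) (c : ℂ) (S : Matrix (Fin 1) (Fin 2) ℂ) (t : Fin 1 → ℂ) (p : MP 1 A) :
    opR D F (linComb r) c a (affSubst D S t p) =
      affSubst D (Matrix.of ![r, S 0 + (t 0 * e) • r]) ![c, t 0 * (e * c + f)]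
        (nestRight D F a p) := by
  induction p using Finsupp.induction_linear with
  | zero => simp [affSubst, substFun_zero, opR_zero D _ _ hlin, nestRight, renameV]
  | add p p' hp hp' => rw [affSubst_add, opR_add D _ _ hlin, hp, hp', nestRight_add D hlin,
      affSubst_add]
  | single α m =>
    obtain ⟨n, rfl⟩ : ∃ n, α = Finsupp.single 0 n := ⟨α 0, Finsupp.unique_single α⟩
    have hlhs : opR D F (linComb r) c a (affSubst D S t (Finsupp.single (Finsupp.single 0 n) m)) =
        (opnd D (linComb (S 0) + (t 0 * e) • linComb r) (t 0 * (e * c + f)))^[n]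
          (opE D F (linComb r) c a m) := by
      rw [← add_zero (Finsupp.single 0 n), ← monMul_single, affSubst_monMul_single_iterate,
        affSubst_single_zero,
        (Function.Semiconj.iterate_right (fun w => opR_opnd D _ c hlin hD _ _ w) n)
          (Finsupp.single 0 m), opR_single D _ _ hlin, zero_monMul]
    have hnest : nestRight D F a (Finsupp.single (Finsupp.single 0 n) m) =
        monMul (Finsupp.single 1 n) (opE D F (Xv 0) 0 a m) := by
      simp [nestRight, renameV, opR_single D _ _ hlin]
    rw [hlhs, hnest, affSubst_monMul_single_iterate, affSubst_opE_Xv_zero]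
    change _ = (opnd D (linComb (S 0 + (t 0 * e) • r)) (t 0 * (e * c + f)))^[n]
      (opE D F (linComb r) c a m)
    rw [linComb_add, linComb_smul]

end RightNormalForm

section LeftNormalForm

variable {F : A → A → MP 1 A} {z : A}

lemma opL_eq_opR_swap (q : MP 2 ℂ) (c : ℂ) (p : MP 2 A) :
    opL D F q c p z = opR D (fun x y => F y x) q c z p := rfl

lemma opL_add (hlin : IsLinearMap ℂ (F · z)) (q : MP 2 ℂ) (c : ℂ) (p p' : MP 2 A) :
    opL D F q c (p + p') z = opL D F q c p z + opL D F q c p' z := by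
  simp only [opL_eq_opR_swap]
  exact opR_add D q c hlin p p'

lemma opL_sub (hlin : IsLinearMap ℂ (F · z)) (q : MP 2 ℂ) (c : ℂ) (p p' : MP 2 A) :
    opL D F q c (p - p') z = opL D F q c p z - opL D F q c p' z := by
  simp only [opL_eq_opR_swap]
  exact opR_sub D q c hlin p p'

lemma nestLeft_add (hlin : IsLinearMap ℂ (F · z)) (p p' : MP 1 A) :
    nestLeft D F (p + p') z = nestLeft D F p z + nestLeft D F p' z := by
  rw [nestLeft, renameV_add, opL_add D hlin]; rfl

lemma opL_linComb_affSubst (hlin : IsLinearMap ℂ (F · z))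
    (hD : ∀ b, F (D b) z = -monMul lam1 (F b z))
    (r : Fin 2 → ℂ) (c : ℂ) (S : Matrix (Fin 1) (Fin 2) ℂ) (t : Fin 1 → ℂ) (p : MP 1 A) :
    opL D F (linComb r) c (affSubst D S t p) z =
      affSubst D (Matrix.of ![S 0 - t 0 • r, (1 + t 0) • r - S 0]) ![-(t 0 * c), c + t 0 * c]
        (nestLeft D F p z) := by
  have hD' : ∀ b, F (D b) z = (-1 : ℂ) • monMul lam1 (F b z) + (0 : ℂ) • mapCoeff D (F b z) :=
    fun b => by rw [hD]; module
  have hnest : nestLeft D F p z =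
      affSubst D !![1, 1; 1, 0] ![0, 0] (nestRight D (fun x y => F y x) z p) := by
    rw [nestLeft, show (Xv 0 + Xv 1 : MP 2 ℂ) = linComb ![1, 1] by simp [linComb],
      renameV_zero_eq_affSubst, opL_eq_opR_swap, opR_linComb_affSubst D hlin hD']
    congr 1
    · ext i j; fin_cases i <;> fin_cases j <;> simp
    · ext i; fin_cases i <;> simp
  rw [opL_eq_opR_swap, opR_linComb_affSubst D hlin hD', hnest, affSubst_affSubst]
  congr 1
  · ext i j; fin_cases i <;> fin_cases j <;> simp [Matrix.mul_apply] <;> ring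
  · ext i; fin_cases i <;> simp

end LeftNormalForm

end Composites

section ConformalSesquilinear

variable {A : Type*} [AddCommGroup A] [Module ℂ A] (D : A →ₗ[ℂ] A)

structure IsConfSesq (F : A → A → MP 1 A) : Prop where
  add_left : ∀ a b c : A, F (a + b) c = F a c + F b c
  smul_left : ∀ (r : ℂ) (a b : A), F (r • a) b = r • F a b
  add_right : ∀ a b c : A, F a (b + c) = F a b + F a c
  smul_right : ∀ (r : ℂ) (a b : A), F a (r • b) = r • F a b
  sesq_left : ∀ a b : A, F (D a) b = -monMul lam1 (F a b)
  sesq_right : ∀ a b : A, F a (D b) = monMul lam1 (F a b) + mapCoeff D (F a b)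

def subOpp (F G : A → A → MP 1 A) : A → A → MP 1 A := fun x y => F x y - sub1 D (G y x)

variable {D} {F G : A → A → MP 1 A}

lemma IsConfSesq.isLinearMap_right (hF : IsConfSesq D F) (a : A) : IsLinearMap ℂ (F a) :=
  ⟨hF.add_right a, fun r b => hF.smul_right r a b⟩

lemma IsConfSesq.isLinearMap_left (hF : IsConfSesq D F) (b : A) : IsLinearMap ℂ (F · b) :=
  ⟨fun x y => hF.add_left x y b, fun r a => hF.smul_left r a b⟩

lemma IsConfSesq.subOpp (hF : IsConfSesq D F) (hG : IsConfSesq D G) :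
    IsConfSesq D (subOpp D F G) where
  add_left a b c := by simp only [LCAF.subOpp, hF.add_left, hG.add_right, sub1_add]; abel
  smul_left r a b := by simp only [LCAF.subOpp, hF.smul_left, hG.smul_right, sub1_smul, smul_sub]
  add_right a b c := by simp only [LCAF.subOpp, hF.add_right, hG.add_left, sub1_add]; abel
  smul_right r a b := by simp only [LCAF.subOpp, hF.smul_right, hG.smul_left, sub1_smul, smul_sub]
  sesq_left a b := by
    simp only [LCAF.subOpp, hF.sesq_left, hG.sesq_right, sub1_add, sub1_monMul_lam1, sub1_mapCoeff,
      monMul_sub]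
    abel
  sesq_right a b := by
    simp only [LCAF.subOpp, hF.sesq_right, hG.sesq_left, sub1_neg, sub1_monMul_lam1, monMul_sub,
      mapCoeff_sub]
    abel

lemma subOpp_skew (a b : A) : subOpp D F F a b = -sub1 D (subOpp D F F b a) := by
  simp only [LCAF.subOpp, sub1_sub, sub1_sub1]; abel

end ConformalSesquilinear

section NormalForm

variable {A : Type*} [AddCommGroup A] [Module ℂ A] {D : A →ₗ[ℂ] A} {F G : A → A → MP 1 A}

lemma Xv_zero_eq_linComb : (Xv 0 : MP 2 ℂ) = linComb ![1, 0] := by simp [linComb]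

lemma Xv_one_eq_linComb : (Xv 1 : MP 2 ℂ) = linComb ![0, 1] := by simp [linComb]

lemma linComb_add_linComb (a b a' b' : ℂ) :
    linComb ![a, b] + linComb ![a', b'] = linComb ![a + a', b + b'] := by
  simp only [linComb, Fin.sum_univ_two, Matrix.cons_val_zero, Matrix.cons_val_one,
    Matrix.cons_val_fin_one]
  module

lemma linComb_sub_linComb (a b a' b' : ℂ) :
    linComb ![a, b] - linComb ![a', b'] = linComb ![a - a', b - b'] := by
  simp only [linComb, Fin.sum_univ_two, Matrix.cons_val_zero, Matrix.cons_val_one,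
    Matrix.cons_val_fin_one]
  module

lemma neg_linComb (a b : ℂ) : -linComb ![a, b] = linComb ![-a, -b] := by
  simp only [linComb, Fin.sum_univ_two, Matrix.cons_val_zero, Matrix.cons_val_one,
    Matrix.cons_val_fin_one]
  module

lemma opE_linComb_eq_affSubst (r₀ r₁ c : ℂ) (x y : A) :
    opE D F (linComb ![r₀, r₁]) c x y = affSubst D !![r₀, r₁] ![c] (F x y) := by
  unfold opE affSubst
  congr 1 <;> funext i <;> fin_cases i <;> rfl

lemma opR_subOpp (a b c : ℂ) (x : A) (p : MP 2 A) :
    opR D (subOpp D F G) (linComb ![a, b]) c x p =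
      opR D F (linComb ![a, b]) c x p - opL D G (linComb ![-a, -b]) (-c - 1) p x := by
  rw [opR, opR, opL, ← Finsupp.sum_sub]
  refine Finsupp.sum_congr fun β _ => ?_
  rw [← monMul_sub, opE_linComb_eq_affSubst, opE_linComb_eq_affSubst, opE_linComb_eq_affSubst,
    subOpp, affSubst_sub, affSubst_sub1]

lemma opL_subOpp (a b c : ℂ) (p : MP 2 A) (z : A) :
    opL D (subOpp D F G) (linComb ![a, b]) c p z =
      opL D F (linComb ![a, b]) c p z - opR D G (linComb ![-a, -b]) (-c - 1) z p := by
  rw [opL, opL, opR, ← Finsupp.sum_sub]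
  refine Finsupp.sum_congr fun β _ => ?_
  rw [← monMul_sub, opE_linComb_eq_affSubst, opE_linComb_eq_affSubst, opE_linComb_eq_affSubst,
    subOpp, affSubst_sub, affSubst_sub1]

lemma IsConfSesq.opR_affSubst (hF : IsConfSesq D F) (r₀ r₁ c s₀ s₁ d : ℂ) (x : A)
    (p : MP 1 A) :
    opR D F (linComb ![r₀, r₁]) c x (affSubst D !![s₀, s₁] ![d] p) =
      affSubst D !![r₀, r₁; s₀ + d * r₀, s₁ + d * r₁] ![c, d * (c + 1)] (nestRight D F x p) := by
  rw [opR_linComb_affSubst D (hF.isLinearMap_right x) (e := 1) (f := 1)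
    (fun b => by rw [hF.sesq_right, one_smul, one_smul])]
  congr 1
  · ext i j; fin_cases i <;> fin_cases j <;> simp [Matrix.vecHead, Matrix.vecTail]
  · ext i; fin_cases i <;> simp

lemma IsConfSesq.opL_affSubst (hF : IsConfSesq D F) (r₀ r₁ c s₀ s₁ d : ℂ)
    (p : MP 1 A) (z : A) :
    opL D F (linComb ![r₀, r₁]) c (affSubst D !![s₀, s₁] ![d] p) z =
      affSubst D !![s₀ - d * r₀, s₁ - d * r₁; (1 + d) * r₀ - s₀, (1 + d) * r₁ - s₁]
        ![-(d * c), c + d * c] (nestLeft D F p z) := by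
  rw [opL_linComb_affSubst D (hF.isLinearMap_left z) (fun b => hF.sesq_left b z)]
  congr 1
  ext i j; fin_cases i <;> fin_cases j <;> simp [Matrix.vecHead, Matrix.vecTail]

end NormalForm

section ConfNS

variable {A : Type*} [AddCommGroup A] [Module ℂ A] {D : A →ₗ[ℂ] A} {su pr cu : A → A → MP 1 A}

lemma IsConfNS.isConfSesq_su (h : IsConfNS D su pr cu) : IsConfSesq D su :=
  ⟨h.su_add_left, h.su_smul_left, h.su_add_right, h.su_smul_right, h.su_sesq_left, h.su_sesq_right⟩

lemma IsConfNS.isConfSesq_pr (h : IsConfNS D su pr cu) : IsConfSesq D pr :=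
  ⟨h.pr_add_left, h.pr_smul_left, h.pr_add_right, h.pr_smul_right, h.pr_sesq_left, h.pr_sesq_right⟩

lemma IsConfNS.isConfSesq_cu (h : IsConfNS D su pr cu) : IsConfSesq D cu :=
  ⟨h.cu_add_left, h.cu_smul_left, h.cu_add_right, h.cu_smul_right, h.cu_sesq_left, h.cu_sesq_right⟩

-- The four axioms as rewrite rules: no left-hand side occurs on a right-hand side.
lemma IsConfNS.nestRight_su_su (h : IsConfNS D su pr cu) (x y z : A) :
    nestRight D su x (su y z) =
      nestLeft D su (su x y) z + nestLeft D su (pr x y) z + nestLeft D su (cu x y) z := by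
  rw [nestRight, h.ax1, ← nestLeft, nestLeft_add D (h.isConfSesq_su.isLinearMap_left z),
    nestLeft_add D (h.isConfSesq_su.isLinearMap_left z)]

lemma IsConfNS.nestLeft_pr_pr (h : IsConfNS D su pr cu) (x y z : A) :
    nestLeft D pr (pr x y) z =
      nestRight D pr x (su y z) + nestRight D pr x (pr y z) + nestRight D pr x (cu y z) := by
  rw [nestLeft, ← h.ax2, ← nestRight, nestRight_add D (h.isConfSesq_pr.isLinearMap_right x),
    nestRight_add D (h.isConfSesq_pr.isLinearMap_right x)]

lemma IsConfNS.nestRight_su_pr (h : IsConfNS D su pr cu) (x y z : A) :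
    nestRight D su x (pr y z) = nestLeft D pr (su x y) z :=
  h.ax3 x y z

lemma IsConfNS.nestRight_su_cu (h : IsConfNS D su pr cu) (x y z : A) :
    nestRight D su x (cu y z) =
      nestLeft D cu (su x y) z + nestLeft D cu (pr x y) z + nestLeft D cu (cu x y) z
        + nestLeft D pr (cu x y) z
        - nestRight D cu x (su y z) - nestRight D cu x (pr y z) - nestRight D cu x (cu y z) := by
  have h4 := h.ax4 x y z
  rw [← nestRight, ← nestLeft, ← nestLeft, ← nestRight, sub_eq_iff_eq_add,
    nestLeft_add D (h.isConfSesq_cu.isLinearMap_left z),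
    nestLeft_add D (h.isConfSesq_cu.isLinearMap_left z),
    nestRight_add D (h.isConfSesq_cu.isLinearMap_right x),
    nestRight_add D (h.isConfSesq_cu.isLinearMap_right x)] at h4
  rw [h4]; abel

lemma IsConfNS.ns1 (h : IsConfNS D su pr cu) (a b c : A) :
    opL D (subOpp D su pr) (Xv 0 + Xv 1) 0
        (renameV (fun _ => (0 : Fin 2)) (subOpp D su pr a b)) c
      - opR D (subOpp D su pr) (Xv 0) 0 a (renameV (fun _ => (1 : Fin 2)) (subOpp D su pr b c))
      - opL D (subOpp D su pr) (Xv 0 + Xv 1) 0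
        (renameV (fun _ => (1 : Fin 2)) (subOpp D su pr b a)) c
      + opR D (subOpp D su pr) (Xv 1) 0 b (renameV (fun _ => (0 : Fin 2)) (subOpp D su pr a c))
      + opL D (subOpp D su pr) (Xv 0 + Xv 1) 0
        (renameV (fun _ => (0 : Fin 2)) (subOpp D cu cu a b)) c = 0 := by
  have hsu := h.isConfSesq_su
  have hpr := h.isConfSesq_pr
  simp only [subOpp, opL_subOpp, opR_subOpp, Xv_zero_eq_linComb, Xv_one_eq_linComb,
    linComb_add_linComb, renameV_zero_eq_affSubst D, renameV_one_eq_affSubst D, affSubst_add,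
    affSubst_sub, affSubst_sub1, opR_sub, opL_sub, hsu.isLinearMap_left, hsu.isLinearMap_right,
    hpr.isLinearMap_left, hpr.isLinearMap_right, hsu.opR_affSubst, hpr.opR_affSubst,
    hsu.opL_affSubst, hpr.opL_affSubst, h.nestRight_su_su, h.nestLeft_pr_pr, h.nestRight_su_pr]
  norm_num
  abel

lemma IsConfNS.ns2 (h : IsConfNS D su pr cu) (a b c : A) :
    opR D (subOpp D cu cu) (Xv 0) 0 a
        (renameV (fun _ => (1 : Fin 2)) (lieNS D (subOpp D su pr) (subOpp D cu cu) b c))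
      - opL D (subOpp D cu cu) (Xv 0 + Xv 1) 0
        (renameV (fun _ => (0 : Fin 2)) (lieNS D (subOpp D su pr) (subOpp D cu cu) a b)) c
      - opR D (subOpp D cu cu) (Xv 1) 0 b
        (renameV (fun _ => (0 : Fin 2)) (lieNS D (subOpp D su pr) (subOpp D cu cu) a c))
      + opR D (subOpp D su pr) (Xv 0) 0 a (renameV (fun _ => (1 : Fin 2)) (subOpp D cu cu b c))
      - opR D (subOpp D su pr) (Xv 1) 0 b (renameV (fun _ => (0 : Fin 2)) (subOpp D cu cu a c))
      + opR D (subOpp D su pr) (-(Xv 0) - Xv 1) (-1) c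
        (renameV (fun _ => (0 : Fin 2)) (subOpp D cu cu a b)) = 0 := by
  have hsu := h.isConfSesq_su
  have hpr := h.isConfSesq_pr
  have hcu := h.isConfSesq_cu
  simp only [lieNS, subOpp, opL_subOpp, opR_subOpp, Xv_zero_eq_linComb, Xv_one_eq_linComb,
    linComb_add_linComb, linComb_sub_linComb, neg_linComb, renameV_zero_eq_affSubst D,
    renameV_one_eq_affSubst D, affSubst_add, affSubst_sub, affSubst_sub1, sub1_sub, sub1_sub1,
    opR_add, opR_sub, opL_add, opL_sub, hsu.isLinearMap_right, hpr.isLinearMap_left,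
    hcu.isLinearMap_left, hcu.isLinearMap_right, hsu.opR_affSubst, hcu.opR_affSubst,
    hpr.opL_affSubst, hcu.opL_affSubst, h.nestRight_su_cu]
  norm_num
  abel

lemma IsConfNS.isNSLie (h : IsConfNS D su pr cu) : IsNSLie D (subOpp D su pr) (subOpp D cu cu) :=
  have ho := h.isConfSesq_su.subOpp h.isConfSesq_pr
  have hv := h.isConfSesq_cu.subOpp h.isConfSesq_cu
  ⟨ho.add_left, ho.smul_left, ho.add_right, ho.smul_right, ho.sesq_left, ho.sesq_right,
    hv.add_left, hv.smul_left, hv.add_right, hv.smul_right, hv.sesq_left, hv.sesq_right,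
    subOpp_skew, h.ns1, h.ns2⟩

end ConfNS

/-- A conformal NS-algebra `(A, ≻_λ, ≺_λ, ⋎_λ)` gives an NS-Lie
conformal algebra with `x∘_λ y = x≻_λ y - y≺_{-λ-∂}x` and
`x∨_λ y = x⋎_λ y - y⋎_{-λ-∂}x`. -/
theorem statement16 {A : Type*} [AddCommGroup A] [Module ℂ A]
    (D : A →ₗ[ℂ] A) (su pr cu : A → A → MP 1 A)
    (h : IsConfNS D su pr cu) :
    IsNSLie D (fun x y => su x y - sub1 D (pr y x))
      (fun x y => cu x y - sub1 D (cu y x)) :=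
  h.isNSLie

end LCAF
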